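/- arXiv:1305.6778 — 7 statements merged into one kernel-verified Lean document; each statement's English description precedes it below -/
import Mathlib

section
/- In the associative algebra A generated by elements a and b subject to the relation a·b − b·a = b², for every natural number ν one has a^ν·b = b·(a+b)^ν. -/
/-- In an associative unital ring containing elements `a`, `b` with
`a·b − b·a = b²`, for every natural number `ν` one has `a^ν·b = b·(a+b)^ν`. -/
theorem pow_mul_b_eq_b_mul_add_pow {R : Type*} [Ring R] (a b : R)
    (h : a * b - b * a = b ^ 2) (ν : ℕ) :
    a ^ ν * b = b * (a + b) ^ ν := by
  have hab : a * b = b * (a + b) := by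
    have := sub_eq_iff_eq_add.mp h
    rw [this]; noncomm_ring
  induction ν with
  | zero => simp
  | succ n ih =>
    rw [pow_succ', mul_assoc, ih, ← mul_assoc, hab, mul_assoc, ← pow_succ']
end

section
/- For j ∈ [1,n+1], the j-th entry of the first column of M̃^{−1} is zero if and only if ρ_j = 0, where α_{n+2} = Σ_{j=1}^{n+1} ρ_j·α_j. -/
/-- Let `α_1,…,α_{n+2} ∈ ℚ^{n+1}` with `α_1,…,α_{n+1}` linearly independent and
`α_{n+2} = Σ ρ_j α_j`.  Let `M̃` be the `(n+2)×(n+2)` matrix whose first row is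
`(1,…,1)` and whose `k`-th column is `(1, α_k)`; assume `M̃` is invertible.
Then for `j ∈ [1,n+1]`, the `j`-th entry of the first column of `M̃⁻¹` is zero
iff `ρ_j = 0`. -/
theorem inverse_first_column_zero_iff (n : ℕ)
    (α : Fin (n + 1) → Fin (n + 1) → ℚ) (β : Fin (n + 1) → ℚ) (ρ : Fin (n + 1) → ℚ)
    (hind : LinearIndependent ℚ α)
    (hβ : ∀ i, β i = ∑ j, ρ j * α j i)
    (M : Matrix (Fin (n + 2)) (Fin (n + 2)) ℚ)
    (hM : M = Matrix.of (Fin.cons (fun _ : Fin (n + 2) => (1 : ℚ))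
        (fun i : Fin (n + 1) => Fin.snoc (fun j : Fin (n + 1) => α j i) (β i))))
    (hinv : IsUnit M.det) :
    ∀ j : Fin (n + 1), M⁻¹ (Fin.castSucc j) 0 = 0 ↔ ρ j = 0 := by
  set x : Fin (n + 2) → ℚ := fun k => M⁻¹ k 0 with hx
  have hMinv := Matrix.mul_nonsing_inv M hinv
  have hMx : ∀ i : Fin (n + 2), ∑ k, M i k * x k = if i = 0 then 1 else 0 := by
    intro i
    have h := congrFun (congrFun hMinv i) 0
    simpa [Matrix.mul_apply, Matrix.one_apply, hx] using h
  have hrow : ∀ i : Fin (n + 1),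
      ∑ k : Fin (n + 1),
        (x (Fin.castSucc k) + ρ k * x (Fin.last (n + 1))) * α k i = 0 := by
    intro i
    have h := hMx i.succ
    rw [hM] at h
    rw [Fin.sum_univ_castSucc] at h
    simp only [Matrix.of_apply, Fin.cons_succ, Fin.snoc_castSucc, Fin.snoc_last,
      if_neg (Fin.succ_ne_zero i), hβ] at h
    calc ∑ k : Fin (n + 1),
        (x (Fin.castSucc k) + ρ k * x (Fin.last (n + 1))) * α k i
        = (∑ k : Fin (n + 1), α k i * x (Fin.castSucc k))
          + (∑ k : Fin (n + 1), ρ k * α k i) * x (Fin.last (n + 1)) := by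
          rw [Finset.sum_mul]
          rw [← Finset.sum_add_distrib]
          congr 1; funext k; ring
      _ = 0 := h
  have hcoef : ∀ k : Fin (n + 1),
      x (Fin.castSucc k) + ρ k * x (Fin.last (n + 1)) = 0 := by
    have := Fintype.linearIndependent_iff.mp hind
      (fun k => x (Fin.castSucc k) + ρ k * x (Fin.last (n + 1))) ?_
    · exact this
    · funext i
      simpa [Finset.sum_apply, smul_eq_mul] using hrow i
  have hrow0 : ∑ k : Fin (n + 2), x k = 1 := by
    have h := hMx 0
    rw [hM] at h
    simpa [Fin.cons_zero] using h
  have hxl : x (Fin.last (n + 1)) ≠ 0 := by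
    intro h0
    have hzero : ∀ k : Fin (n + 2), x k = 0 := by
      intro k
      refine Fin.lastCases h0 (fun k => ?_) k
      have := hcoef k
      rw [h0] at this
      linarith
    rw [Finset.sum_congr rfl (fun k _ => hzero k)] at hrow0
    simp at hrow0
  intro j
  have hj := hcoef j
  constructor
  · intro h
    have : ρ j * x (Fin.last (n + 1)) = 0 := by
      have : x (Fin.castSucc j) = M⁻¹ (Fin.castSucc j) 0 := rfl
      rw [this, h] at hj; linarith
    exact (mul_eq_zero.mp this).resolve_right hxl
  · intro h
    have : x (Fin.castSucc j) = 0 := by rw [h] at hj; linarith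
    exact this
end

section
/- Let f ∈ C[x_0,…,x_n] satisfy condition (C) (the augmented exponent matrix M̃ has rank n+2). Then f is integral over the subring C[x_0·∂f/∂x_0, …, x_n·∂f/∂x_n] of C[x_0,…,x_n]; indeed f satisfies a monic polynomial equation of degree d+h (where d+h = |Δ| from the relation m^Δ = λ^r·m^δ among the monomials of f) with coefficients in this subring. -/
/-! The monomials `w = (x^{α_1}, …, x^{α_{n+1}}, λ x^β)` of `f` and the log-derivatives
`F = (f, x_0 ∂_0 f, …, x_n ∂_n f)` satisfy `F = M̃ w`, so inverting `M̃` writes every monomial as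
`w_k = c_k f + g_k` with `g_k ∈ A = ℂ[x_i ∂_i f]` and `c = M̃⁻¹ e_0`. The integer relation
`z = (p, -r)` among the exponents satisfies `M̃ z = (Σ z) e_0`, so `c` is proportional to `z`, and
`Σ z ≠ 0` since `M̃` is invertible. The relation gives `∏ w_k ^ z_k⁺ = μ ∏ w_k ^ z_k⁻`; substituting
`w_k = c_k (f + g_k / c_k)` makes both sides scalar multiples of monic polynomials over `A`
evaluated at `f`, of degrees `Σ z⁺ ≠ Σ z⁻`, and a suitable combination of the two is monic of the
larger degree and vanishes at `f`. -/

section MonicCombination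

open Polynomial

variable {K R S : Type*} [Field K] [CommRing R] [CommRing S] [Algebra K R] [Algebra R S]
  [Algebra K S] [IsScalarTower K R S]

theorem exists_monic_aeval_eq_zero_of_smul_aeval_eq_of_natDegree_lt {x : S} {P Q : R[X]}
    (hP : P.Monic) (hPQ : Q.natDegree < P.natDegree) {a b : K} (ha : a ≠ 0)
    (h : a • aeval x P = b • aeval x Q) :
    ∃ q : R[X], q.Monic ∧ q.natDegree = P.natDegree ∧ aeval x q = 0 := by
  have hdeg : ((a⁻¹ * b) • Q).natDegree < P.natDegree := (natDegree_smul_le _ _).trans_lt hPQ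
  refine ⟨P - (a⁻¹ * b) • Q, hP.sub_of_left (degree_lt_degree hdeg),
    natDegree_sub_eq_left_of_natDegree_lt hdeg, ?_⟩
  rw [map_sub, AlgHom.map_smul_of_tower, mul_smul, ← h, inv_smul_smul₀ ha, sub_self]

theorem exists_monic_aeval_eq_zero_of_smul_aeval_eq {x : S} {P Q : R[X]}
    (hP : P.Monic) (hQ : Q.Monic) (hPQ : P.natDegree ≠ Q.natDegree) {a b : K} (ha : a ≠ 0)
    (hb : b ≠ 0) (h : a • aeval x P = b • aeval x Q) :
    ∃ q : R[X], q.Monic ∧ q.natDegree = max P.natDegree Q.natDegree ∧ aeval x q = 0 := by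
  rcases hPQ.lt_or_gt with hlt | hlt
  · rw [max_eq_right hlt.le]
    exact exists_monic_aeval_eq_zero_of_smul_aeval_eq_of_natDegree_lt hQ hlt hb h.symm
  · rw [max_eq_left hlt.le]
    exact exists_monic_aeval_eq_zero_of_smul_aeval_eq_of_natDegree_lt hP hlt ha h

theorem pow_eq_smul_aeval (x : S) {c : K} (g : R) {e : ℕ} (hc : c = 0 → e = 0) :
    (c • x + algebraMap R S g) ^ e = c ^ e • aeval x ((X + C (c⁻¹ • g)) ^ e) := by
  rcases eq_or_ne e 0 with rfl | he
  · simp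
  have hg : algebraMap R S (c⁻¹ • g) = c⁻¹ • algebraMap R S g := algebraMap.coe_smul c⁻¹ g S
  rw [map_pow, ← _root_.smul_pow, map_add, aeval_X, aeval_C, hg, smul_add,
    smul_inv_smul₀ (mt hc he)]

theorem exists_monic_prod_pow_eq_smul_aeval [Nontrivial R] {ι : Type*} (s : Finset ι) (x : S)
    (c : ι → K) (g : ι → R) (e : ι → ℕ) (hc : ∀ k, c k = 0 → e k = 0) :
    ∃ P : R[X], P.Monic ∧ P.natDegree = ∑ k ∈ s, e k ∧
      ∏ k ∈ s, (c k • x + algebraMap R S (g k)) ^ e k = (∏ k ∈ s, c k ^ e k) • aeval x P := by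
  have hmonic : ∀ k, ((X + C ((c k)⁻¹ • g k)) ^ e k).Monic := fun k => (monic_X_add_C _).pow _
  refine ⟨∏ k ∈ s, (X + C ((c k)⁻¹ • g k)) ^ e k, monic_prod_of_monic _ _ fun k _ => hmonic k,
    ?_, ?_⟩
  · rw [natDegree_prod_of_monic _ _ fun k _ => hmonic k]
    exact Finset.sum_congr rfl fun k _ => by
      rw [(monic_X_add_C _).natDegree_pow, natDegree_X_add_C, mul_one]
  · rw [map_prod, ← Finset.prod_smul]
    exact Finset.prod_congr rfl fun k _ => pow_eq_smul_aeval x (g k) (hc k)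

theorem exists_monic_aeval_eq_zero_of_smul_prod_pow_eq [Nontrivial R] {ι : Type*} (s : Finset ι)
    (x : S) (c : ι → K) (g : ι → R) {e₁ e₂ : ι → ℕ} (hc₁ : ∀ k, c k = 0 → e₁ k = 0)
    (hc₂ : ∀ k, c k = 0 → e₂ k = 0) (he : ∑ k ∈ s, e₁ k ≠ ∑ k ∈ s, e₂ k) {a b : K} (ha : a ≠ 0)
    (hb : b ≠ 0)
    (h : a • ∏ k ∈ s, (c k • x + algebraMap R S (g k)) ^ e₁ k
      = b • ∏ k ∈ s, (c k • x + algebraMap R S (g k)) ^ e₂ k) :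
    ∃ q : R[X], q.Monic ∧ q.natDegree = max (∑ k ∈ s, e₁ k) (∑ k ∈ s, e₂ k) ∧ aeval x q = 0 := by
  have hprod : ∀ e : ι → ℕ, (∀ k, c k = 0 → e k = 0) → ∏ k ∈ s, c k ^ e k ≠ 0 :=
    fun e hc => Finset.prod_ne_zero_iff.mpr fun k _ hk =>
      (pow_eq_zero_iff'.mp hk).2 (hc k (pow_eq_zero_iff'.mp hk).1)
  obtain ⟨P, hP, hPdeg, hPx⟩ := exists_monic_prod_pow_eq_smul_aeval s x c g e₁ hc₁
  obtain ⟨Q, hQ, hQdeg, hQx⟩ := exists_monic_prod_pow_eq_smul_aeval s x c g e₂ hc₂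
  rw [hPx, hQx, smul_smul, smul_smul] at h
  rw [← hPdeg, ← hQdeg]
  exact exists_monic_aeval_eq_zero_of_smul_aeval_eq hP hQ (hPdeg ▸ hQdeg ▸ he)
    (mul_ne_zero ha (hprod e₁ hc₁)) (mul_ne_zero hb (hprod e₂ hc₂)) h

end MonicCombination

theorem Matrix.eq_sum_nonsing_inv_smul {R V ι : Type*} [CommRing R] [AddCommGroup V] [Module R V]
    [Fintype ι] [DecidableEq ι] (M : Matrix ι ι R) (hM : IsUnit M.det) {F W : ι → V}
    (h : ∀ l, F l = ∑ k, M l k • W k) (k : ι) : W k = ∑ l, M⁻¹ k l • F l := by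
  simp_rw [h, Finset.smul_sum, smul_smul]
  rw [Finset.sum_comm]
  simp_rw [← Finset.sum_smul, ← Matrix.mul_apply, M.nonsing_inv_mul hM, Matrix.one_apply, ite_smul,
    one_smul, zero_smul, Finset.sum_ite_eq, Finset.mem_univ, if_true]

theorem MvPolynomial.prod_X_pow_eq_monomial_equivFunOnFinite {R σ : Type*} [CommSemiring R]
    [Fintype σ] (e : σ → ℕ) :
    ∏ i, (X i : MvPolynomial σ R) ^ e i = monomial (Finsupp.equivFunOnFinite.symm e) 1 := by
  rw [monomial_eq, C_1, one_mul, Finsupp.prod_fintype _ _ fun _ => pow_zero _]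
  rfl

theorem MvPolynomial.smul_prod_monomial_pow_comm {R σ ι : Type*} [CommSemiring R] (s : Finset ι)
    (d : ι → σ →₀ ℕ) (a : ι → R) {e₁ e₂ : ι → ℕ}
    (h : ∑ k ∈ s, e₁ k • d k = ∑ k ∈ s, e₂ k • d k) :
    (∏ k ∈ s, a k ^ e₂ k) • ∏ k ∈ s, monomial (d k) (a k) ^ e₁ k
      = (∏ k ∈ s, a k ^ e₁ k) • ∏ k ∈ s, monomial (d k) (a k) ^ e₂ k := by
  simp_rw [monomial_pow]
  rw [← monomial_sum_prod, ← monomial_sum_prod, smul_monomial, smul_monomial, h, smul_eq_mul,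
    smul_eq_mul, mul_comm]

theorem Finsupp.sum_toNat_smul_eq_sum_neg_toNat_smul {σ ι : Type*} (s : Finset ι)
    (d : ι → σ →₀ ℕ) (z : ι → ℤ) (h : ∀ i, ∑ k ∈ s, z k * d k i = 0) :
    ∑ k ∈ s, (z k).toNat • d k = ∑ k ∈ s, (-z k).toNat • d k := by
  ext i
  simp only [Finsupp.finsetSum_apply, Finsupp.smul_apply, smul_eq_mul]
  apply Nat.cast_injective (R := ℤ)
  push_cast
  rw [← sub_eq_zero, ← Finset.sum_sub_distrib]
  simp_rw [← sub_mul, Int.toNat_sub_toNat_neg]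
  exact h i

open MvPolynomial
open scoped Matrix

def augmentedExponentMatrix {m : ℕ} (d : Fin (m + 1) → Fin m →₀ ℕ) :
    Matrix (Fin (m + 1)) (Fin (m + 1)) ℚ :=
  Matrix.of fun l k => Fin.cases 1 (fun i => (d k i : ℚ)) l

section Circuit

variable {m : ℕ} (d : Fin (m + 1) → Fin m →₀ ℕ)

@[simp]
theorem augmentedExponentMatrix_zero (k : Fin (m + 1)) : augmentedExponentMatrix d 0 k = 1 := rfl

@[simp]
theorem augmentedExponentMatrix_succ (i : Fin m) (k : Fin (m + 1)) :
    augmentedExponentMatrix d i.succ k = d k i := rfl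

theorem augmentedExponentMatrix_mulVec_eq_single {z : Fin (m + 1) → ℤ}
    (hz : ∀ i, ∑ k, z k * d k i = 0) :
    augmentedExponentMatrix d *ᵥ (fun k => (z k : ℚ)) = Pi.single 0 (∑ k, (z k : ℚ)) := by
  funext l
  refine Fin.cases ?_ (fun i => ?_) l
  · simp [Matrix.mulVec, dotProduct]
  · simp only [Matrix.mulVec, dotProduct, augmentedExponentMatrix_succ, Fin.succ_ne_zero,
      Pi.single_apply, if_false]
    exact_mod_cast (by simpa only [mul_comm] using hz i : ∑ k, (d k i : ℤ) * z k = 0)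

variable {d}

theorem sum_ne_zero_of_augmentedExponentMatrix {z : Fin (m + 1) → ℤ}
    (hdet : (augmentedExponentMatrix d).det ≠ 0) (hz : z ≠ 0)
    (hrel : ∀ i, ∑ k, z k * d k i = 0) : ∑ k, (z k : ℚ) ≠ 0 := by
  intro hsum
  refine hdet (Matrix.exists_mulVec_eq_zero_iff.mp ⟨fun k => (z k : ℚ), fun h => hz ?_, ?_⟩)
  · funext k
    simpa using congrFun h k
  · rw [augmentedExponentMatrix_mulVec_eq_single d hrel, hsum, Pi.single_zero]

theorem augmentedExponentMatrix_inv_mul_sum {z : Fin (m + 1) → ℤ}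
    (hdet : (augmentedExponentMatrix d).det ≠ 0) (hrel : ∀ i, ∑ k, z k * d k i = 0)
    (k : Fin (m + 1)) : (augmentedExponentMatrix d)⁻¹ k 0 * ∑ k, (z k : ℚ) = z k := by
  have h : (augmentedExponentMatrix d)⁻¹ *ᵥ (augmentedExponentMatrix d *ᵥ fun k => (z k : ℚ))
      = fun k => (z k : ℚ) := by
    rw [Matrix.mulVec_mulVec, Matrix.nonsing_inv_mul _ (isUnit_iff_ne_zero.mpr hdet),
      Matrix.one_mulVec]
  rw [augmentedExponentMatrix_mulVec_eq_single d hrel] at h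
  simpa using congrFun h k

variable {K : Type*} [Field K] [CharZero K] {a : Fin (m + 1) → K} {f : MvPolynomial (Fin m) K}

theorem X_mul_pderiv_eq_sum_augmentedExponentMatrix_smul
    (hf : f = ∑ k, monomial (d k) (a k)) (l : Fin (m + 1)) :
    (Fin.cons f fun i => X i * pderiv i f : Fin (m + 1) → MvPolynomial (Fin m) K) l
      = ∑ k, augmentedExponentMatrix d l k • monomial (d k) (a k) := by
  refine Fin.cases ?_ (fun i => ?_) l
  · simp [hf]
  · simp only [Fin.cons_succ, augmentedExponentMatrix_succ, hf, map_sum, Finset.mul_sum,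
      X_mul_pderiv_monomial, Nat.cast_smul_eq_nsmul]

theorem monomial_sub_smul_mem_adjoin (hf : f = ∑ k, monomial (d k) (a k))
    (hdet : (augmentedExponentMatrix d).det ≠ 0) (k : Fin (m + 1)) :
    monomial (d k) (a k) - (((augmentedExponentMatrix d)⁻¹ k 0 : ℚ) : K) • f
      ∈ Algebra.adjoin K (Set.range fun i => X i * pderiv i f) := by
  rw [Matrix.eq_sum_nonsing_inv_smul _ (isUnit_iff_ne_zero.mpr hdet)
      (X_mul_pderiv_eq_sum_augmentedExponentMatrix_smul hf) k,
    Fin.sum_univ_succ, Fin.cons_zero, Rat.cast_smul_eq_qsmul, add_sub_cancel_left]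
  refine Subalgebra.sum_mem _ fun i _ => ?_
  rw [Fin.cons_succ, ← Rat.cast_smul_eq_qsmul K]
  exact Subalgebra.smul_mem _ (Algebra.subset_adjoin (Set.mem_range_self i)) _

theorem exists_monic_aeval_eq_zero_of_augmentedExponentMatrix_det_ne_zero
    (hf : f = ∑ k, monomial (d k) (a k)) (ha : ∀ k, a k ≠ 0)
    (hdet : (augmentedExponentMatrix d).det ≠ 0) {z : Fin (m + 1) → ℤ} (hz : z ≠ 0)
    (hrel : ∀ i, ∑ k, z k * d k i = 0) :
    ∃ q : Polynomial (Algebra.adjoin K (Set.range fun i => X i * pderiv i f)), q.Monic ∧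
      q.natDegree = max (∑ k, (z k).toNat) (∑ k, (-z k).toNat) ∧ Polynomial.aeval f q = 0 := by
  set A := Algebra.adjoin K (Set.range fun i => X i * pderiv i f)
  set c : Fin (m + 1) → K := fun k => (((augmentedExponentMatrix d)⁻¹ k 0 : ℚ) : K)
  obtain ⟨g, hg⟩ : ∃ g : Fin (m + 1) → A,
      ∀ k, monomial (d k) (a k) = c k • f + algebraMap A _ (g k) :=
    ⟨fun k => ⟨_, monomial_sub_smul_mem_adjoin hf hdet k⟩, fun k => (add_sub_cancel _ _).symm⟩
  have hc : ∀ k, c k = 0 → z k = 0 := by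
    intro k hk
    have h := augmentedExponentMatrix_inv_mul_sum hdet hrel k
    rw [Rat.cast_eq_zero.mp hk, zero_mul] at h
    exact_mod_cast h.symm
  have hdeg : ∑ k, (z k).toNat ≠ ∑ k, (-z k).toNat := by
    intro h
    apply sum_ne_zero_of_augmentedExponentMatrix hdet hz hrel
    have h' : ∑ k, (((z k).toNat : ℤ) - ((-z k).toNat : ℤ)) = 0 := by
      rw [Finset.sum_sub_distrib, sub_eq_zero]
      exact_mod_cast h
    simp_rw [Int.toNat_sub_toNat_neg] at h'
    exact_mod_cast h'
  have hprod : ∀ e : Fin (m + 1) → ℕ, ∏ k, a k ^ e k ≠ 0 :=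
    fun e => Finset.prod_ne_zero_iff.mpr fun k _ => pow_ne_zero _ (ha k)
  have hrel' := smul_prod_monomial_pow_comm Finset.univ d a
    (Finsupp.sum_toNat_smul_eq_sum_neg_toNat_smul _ d z hrel)
  simp only [hg] at hrel'
  exact exists_monic_aeval_eq_zero_of_smul_prod_pow_eq _ f c g (fun k hk => by simp [hc k hk])
    (fun k hk => by simp [hc k hk]) hdeg (hprod _) (hprod _) hrel'

end Circuit


section SnocExponents

open MvPolynomial

variable {m : ℕ} (α : Fin m → Fin m → ℕ) (β : Fin m → ℕ)

theorem augmentedExponentMatrix_snoc :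
    augmentedExponentMatrix (Fin.snoc (fun j => Finsupp.equivFunOnFinite.symm (α j))
      (Finsupp.equivFunOnFinite.symm β))
      = Matrix.of (Fin.cons (fun _ : Fin (m + 1) => (1 : ℚ))
          (fun i : Fin m => Fin.snoc (fun j : Fin m => (α j i : ℚ)) (β i : ℚ))) := by
  ext l k
  refine Fin.cases ?_ (fun i => Fin.lastCases ?_ (fun j => ?_) k) l <;>
    simp [augmentedExponentMatrix]

variable {α β}

theorem sum_snoc_mul_snoc_eq_zero {ρ : Fin m → ℚ} (hβ : ∀ i, (β i : ℚ) = ∑ j, ρ j * (α j i : ℚ))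
    {r : ℕ} {p : Fin m → ℤ} (hp : ∀ j, (p j : ℚ) = r * ρ j) (i : Fin m) :
    ∑ k, Fin.snoc (α := fun _ => ℤ) p (-r) k
      * Fin.snoc (α := fun _ => Fin m →₀ ℕ) (fun j => Finsupp.equivFunOnFinite.symm (α j))
          (Finsupp.equivFunOnFinite.symm β) k i = 0 := by
  have h : ∑ j, (p j : ℚ) * α j i - r * β i = 0 := by
    simp_rw [hp, hβ, Finset.mul_sum, mul_assoc, sub_self]
  have h' : ∑ j, p j * (α j i : ℤ) - r * β i = 0 := by exact_mod_cast h
  simpa [Fin.sum_univ_castSucc, sub_eq_add_neg] using h'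

end SnocExponents

theorem Finset.sum_filter_eq_sum_toNat {ι : Type*} (s : Finset ι) (P : ι → Prop) [DecidablePred P]
    (u : ι → ℤ) (hP : ∀ j, P j ↔ 0 < u j) :
    ∑ j ∈ s.filter P, u j = ∑ j ∈ s, ((u j).toNat : ℤ) := by
  rw [Finset.sum_filter]
  refine Finset.sum_congr rfl fun j _ => ?_
  by_cases h : 0 < u j
  · rw [if_pos ((hP j).mpr h)]
    omega
  · rw [if_neg (mt (hP j).mp h)]
    omega

theorem toNat_max_sum_filter_eq_max_sum_toNat_snoc {m r : ℕ} (hr : 0 < r) {ρ : Fin m → ℚ}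
    {p : Fin m → ℤ} (hp : ∀ j, (p j : ℚ) = r * ρ j) :
    (max ((r : ℤ) + ∑ j ∈ Finset.univ.filter (fun j => ρ j < 0), (- p j))
      (∑ j ∈ Finset.univ.filter (fun j => 0 < ρ j), p j)).toNat
      = max (∑ k, (Fin.snoc (α := fun _ => ℤ) p (-r) k).toNat)
          (∑ k, (-Fin.snoc (α := fun _ => ℤ) p (-r) k).toNat) := by
  have hr' : (0 : ℚ) < r := by exact_mod_cast hr
  rw [Finset.sum_filter_eq_sum_toNat _ _ (fun j => -p j) fun j => by
      rw [neg_pos, ← Int.cast_lt_zero (R := ℚ), hp j]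
      exact (smul_neg_iff_of_pos_left hr').symm,
    Finset.sum_filter_eq_sum_toNat _ _ p fun j => by
      rw [← Int.cast_pos (R := ℚ), hp j, mul_pos_iff_of_pos_left hr']]
  simp only [Fin.sum_univ_castSucc, Fin.snoc_castSucc, Fin.snoc_last, neg_neg, Int.toNat_natCast,
    ← Nat.cast_sum, ← Nat.cast_add, ← Nat.cast_max]
  omega

theorem f_integral_over_log_derivatives_general (n : ℕ)
    (α : Fin (n + 1) → Fin (n + 1) → ℕ) (β : Fin (n + 1) → ℕ) (ρ : Fin (n + 1) → ℚ)
    (hβ : ∀ i, (β i : ℚ) = ∑ j, ρ j * (α j i : ℚ))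
    (r : ℕ) (hr : 0 < r)
    (p : Fin (n + 1) → ℤ) (hp : ∀ j, (p j : ℚ) = (r : ℚ) * ρ j)
    (hC : (Matrix.of (Fin.cons (fun _ : Fin (n + 2) => (1 : ℚ))
        (fun i : Fin (n + 1) => Fin.snoc (fun j : Fin (n + 1) => (α j i : ℚ)) (β i : ℚ)))).det ≠ 0)
    (lam : ℂ) (hlam : lam ≠ 0)
    (f : MvPolynomial (Fin (n + 1)) ℂ)
    (hf : f = (∑ j, ∏ i, (X i : MvPolynomial (Fin (n + 1)) ℂ) ^ α j i)
        + C lam * ∏ i, (X i : MvPolynomial (Fin (n + 1)) ℂ) ^ β i) :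
    IsIntegral (Algebra.adjoin ℂ
        (Set.range (fun i : Fin (n + 1) => (X i : MvPolynomial (Fin (n + 1)) ℂ) * pderiv i f))) f ∧
    ∃ q : Polynomial (Algebra.adjoin ℂ
        (Set.range (fun i : Fin (n + 1) => (X i : MvPolynomial (Fin (n + 1)) ℂ) * pderiv i f))),
      q.Monic ∧
      q.natDegree = (max ((r : ℤ) + ∑ j ∈ Finset.univ.filter (fun j => ρ j < 0), (- p j))
          (∑ j ∈ Finset.univ.filter (fun j => 0 < ρ j), p j)).toNat ∧
      Polynomial.aeval f q = 0 := by
  set d : Fin (n + 2) → Fin (n + 1) →₀ ℕ :=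
    Fin.snoc (fun j => Finsupp.equivFunOnFinite.symm (α j)) (Finsupp.equivFunOnFinite.symm β)
  have hfd : f = ∑ k, monomial (d k) (Fin.snoc (α := fun _ => ℂ) (fun _ => 1) lam k) := by
    simp [hf, Fin.sum_univ_castSucc, d, prod_X_pow_eq_monomial_equivFunOnFinite, C_mul_monomial]
  have hz : Fin.snoc (α := fun _ => ℤ) p (-r) ≠ 0 := fun h => by
    simpa [hr.ne'] using congrFun h (Fin.last _)
  obtain ⟨q, hq, hdeg, hroot⟩ := exists_monic_aeval_eq_zero_of_augmentedExponentMatrix_det_ne_zero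
    hfd (Fin.lastCases (by simpa using hlam) fun _ => by simp)
    ((augmentedExponentMatrix_snoc α β).symm ▸ hC) hz (sum_snoc_mul_snoc_eq_zero hβ hp)
  exact ⟨⟨q, hq, hroot⟩, q, hq,
    hdeg.trans (toNat_max_sum_filter_eq_max_sum_toNat_snoc hr hp).symm, hroot⟩

/-- Let `f = Σ_{j=1}^{n+1} x^{α_j} + λ·x^{α_{n+2}}` satisfy condition (C)
(the augmented exponent matrix `M̃` is invertible).  Then `f` is integral over
the subring `ℂ[x_0·∂f/∂x_0,…,x_n·∂f/∂x_n]`; indeed `f` satisfies a monic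
polynomial equation of degree `d+h = max(D₁,D₂)` (the weight `|Δ|` coming from
the relation `m^Δ = λ^r·m^δ` among the monomials of `f`) with coefficients in
that subring. -/
theorem f_integral_over_log_derivatives (n : ℕ)
    (α : Fin (n + 1) → Fin (n + 1) → ℕ) (β : Fin (n + 1) → ℕ) (ρ : Fin (n + 1) → ℚ)
    (hind : LinearIndependent ℚ (fun j : Fin (n + 1) => fun i => (α j i : ℚ)))
    (hβ : ∀ i, (β i : ℚ) = ∑ j, ρ j * (α j i : ℚ))
    (r : ℕ) (hr : 0 < r)
    (hrint : ∀ j, ∃ p : ℤ, (r : ℚ) * ρ j = (p : ℚ))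
    (hrmin : ∀ r' : ℕ, 0 < r' → (∀ j, ∃ p : ℤ, (r' : ℚ) * ρ j = (p : ℚ)) → r ≤ r')
    (p : Fin (n + 1) → ℤ) (hp : ∀ j, (p j : ℚ) = (r : ℚ) * ρ j)
    (hC : (Matrix.of (Fin.cons (fun _ : Fin (n + 2) => (1 : ℚ))
        (fun i : Fin (n + 1) => Fin.snoc (fun j : Fin (n + 1) => (α j i : ℚ)) (β i : ℚ)))).det ≠ 0)
    (lam : ℂ) (hlam : lam ≠ 0)
    (f : MvPolynomial (Fin (n + 1)) ℂ)
    (hf : f = (∑ j, ∏ i, (X i : MvPolynomial (Fin (n + 1)) ℂ) ^ α j i)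
        + C lam * ∏ i, (X i : MvPolynomial (Fin (n + 1)) ℂ) ^ β i) :
    IsIntegral (Algebra.adjoin ℂ
        (Set.range (fun i : Fin (n + 1) => (X i : MvPolynomial (Fin (n + 1)) ℂ) * pderiv i f))) f ∧
    ∃ q : Polynomial (Algebra.adjoin ℂ
        (Set.range (fun i : Fin (n + 1) => (X i : MvPolynomial (Fin (n + 1)) ℂ) * pderiv i f))),
      q.Monic ∧
      q.natDegree = (max ((r : ℤ) + ∑ j ∈ Finset.univ.filter (fun j => ρ j < 0), (- p j))
          (∑ j ∈ Finset.univ.filter (fun j => 0 < ρ j), p j)).toNat ∧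
      Polynomial.aeval f q = 0 :=
  f_integral_over_log_derivatives_general n α β ρ hβ r hr p hp hC lam hlam f hf
end

section
/- Let E be a local (a,b)-module (i.e. a^N·E ⊂ b·E for some N ≥ 1). Then there exists a smallest normal submodule I ⊂ E such that E/I is regular, and this I is totally irregular, i.e. every Ã-linear map from I to a simple pole (a,b)-module is zero. -/
open PowerSeries

/-- An (a,b)-module: a left module over the `b`-adic completion `Ã` of `ℂ⟨a,b⟩`
(relation `ab − ba = b²`) which is free of finite rank over `ℂ⟦b⟧`.  Here `b` acts
as scalar multiplication by the power series variable `X` and `a` is a `ℂ`-linear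
endomorphism satisfying the commutation relation. -/
structure ABMod where
  carrier : Type
  [acg : AddCommGroup carrier]
  [modC : Module ℂ carrier]
  [modPS : Module (PowerSeries ℂ) carrier]
  [tower : IsScalarTower ℂ (PowerSeries ℂ) carrier]
  [free : Module.Free (PowerSeries ℂ) carrier]
  [finite : Module.Finite (PowerSeries ℂ) carrier]
  a : carrier →ₗ[ℂ] carrier
  comm : ∀ x : carrier,
    a ((X : ℂ⟦X⟧) • x) = (X : ℂ⟦X⟧) • a x + ((X * X : ℂ⟦X⟧)) • x

attribute [instance] ABMod.acg ABMod.modC ABMod.modPS ABMod.tower ABMod.free ABMod.finite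

/-- `F` has a simple pole : `a·F ⊆ b·F`. -/
def ABMod.SimplePole (F : ABMod) : Prop :=
  ∀ x : F.carrier, ∃ y : F.carrier, F.a x = (X : ℂ⟦X⟧) • y

section
variable (E : Type) [AddCommGroup E] [Module ℂ E] [Module (PowerSeries ℂ) E]
  [IsScalarTower ℂ (PowerSeries ℂ) E] (a : E →ₗ[ℂ] E)

/-- A submodule is normal when `N ∩ bE = b·N`. -/
def IsNormal (N : Submodule (PowerSeries ℂ) E) : Prop :=
  ∀ x ∈ N, (∃ y : E, x = (X : ℂ⟦X⟧) • y) → ∃ y ∈ N, x = (X : ℂ⟦X⟧) • y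

/-- The quotient `E/N` is regular : it embeds (`Ã`-linearly) in a simple pole
(a,b)-module, i.e. there is an `Ã`-linear map `g` from `E` to a simple pole
(a,b)-module whose kernel is exactly `N`. -/
def RegularQuotient (N : Submodule (PowerSeries ℂ) E) : Prop :=
  ∃ F : ABMod, F.SimplePole ∧ ∃ g : E →ₗ[ℂ] F.carrier,
    (∀ x : E, g ((X : ℂ⟦X⟧) • x) = (X : ℂ⟦X⟧) • g x) ∧
    (∀ x : E, g (a x) = F.a (g x)) ∧
    (∀ x : E, g x = 0 ↔ x ∈ N)

/-- A submodule `I` (with its induced (a,b)-structure) is totally irregular :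
every `Ã`-linear map from `I` to a simple pole (a,b)-module vanishes. -/
def TotallyIrregular (I : Submodule (PowerSeries ℂ) E) : Prop :=
  ∀ F : ABMod, F.SimplePole →
    ∀ g : I →ₗ[ℂ] F.carrier,
      (∀ x : I, g ((X : ℂ⟦X⟧) • x) = (X : ℂ⟦X⟧) • g x) →
      (∀ (x : I) (h : a (x : E) ∈ I), g ⟨a (x : E), h⟩ = F.a (g x)) →
      g = 0

end

/-!
Regular quotients `E/J` are exactly the kernels `J` of `Ã`-linear maps to simple pole modules, so
products show that they are stable under intersection; as `E/J` is torsion free, a regular kernel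
`I` of minimal rank lies in every other one. This `I` is totally irregular: extend `g : I → F`
along a retraction `E → I` to a `b`-linear `G : E → F`. The defect `G ∘ a - a ∘ G` vanishes on `I`,
so after multiplying by some `b ^ c` it factors through the embedding `E/I ↪ F₁`. Twisting
`F₁ × F` by this factor gives a simple pole module into which `x ↦ (G₁ x, b ^ (c + 1) G x)` maps
`E` with kernel `I ∩ ker G`, and minimality forces `I ⊆ ker G`, i.e. `g = 0`.
-/

noncomputable section

theorem Submodule.exists_retraction {R M : Type*} [Ring R] [AddCommGroup M] [Module R M]
    (p : Submodule R M) [Module.Projective R (M ⧸ p)] :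
    ∃ r : M →ₗ[R] p, r ∘ₗ p.subtype = LinearMap.id := by
  obtain ⟨s, hs⟩ := Module.projective_lifting_property p.mkQ LinearMap.id p.mkQ_surjective
  refine (((LinearMap.exact_subtype_mkQ p).split_tfae p.injective_subtype
    p.mkQ_surjective).out 0 1).mp ?_
  exact ⟨s, hs⟩

section Domain

variable {R M : Type*} [CommRing R] [IsDomain R] [IsNoetherianRing R]
  [AddCommGroup M] [Module R M]

theorem Submodule.le_of_le_of_finrank_le [Module.Finite R M] {K I : Submodule R M}
    [Module.IsTorsionFree R (M ⧸ K)] (hKI : K ≤ I)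
    (h : Module.finrank R I ≤ Module.finrank R K) : I ≤ K := by
  set T := I.map K.mkQ
  have hT : Module.finrank R T = 0 := by
    have e := T.finrank_quotient_add_finrank
    rw [(Submodule.quotientQuotientEquivQuotient K I hKI).finrank_eq] at e
    have := K.finrank_quotient_add_finrank
    have := I.finrank_quotient_add_finrank
    omega
  intro x hx
  obtain ⟨⟨r, hr⟩, hrx⟩ := (Module.finrank_eq_zero_iff_isTorsion.mp hT : Module.IsTorsion R T)
    (x := ⟨K.mkQ x, x, hx, rfl⟩)
  have hrx : r • K.mkQ x = 0 := congrArg Subtype.val hrx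
  rw [smul_eq_zero, or_iff_right (nonZeroDivisors.ne_zero hr)] at hrx
  simpa using hrx

end Domain

section DVR

variable {R M : Type*} [CommRing R] [IsDomain R] [IsDiscreteValuationRing R]
  [AddCommGroup M] [Module R M] {ϖ : R}

theorem Submodule.isTorsionFree_quotient_of_smul_mem (hϖ : Irreducible ϖ) {p : Submodule R M}
    (hp : ∀ x, ϖ • x ∈ p → x ∈ p) : Module.IsTorsionFree R (M ⧸ p) := by
  have hpow : ∀ (n : ℕ) (x : M), ϖ ^ n • x ∈ p → x ∈ p := by
    intro n
    induction n with
    | zero => simp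
    | succ n ih => exact fun x hx => ih x (hp _ (by rwa [← mul_smul, ← pow_succ']))
  refine Module.isTorsionFree_iff_smul_eq_zero.mpr fun r z hrz =>
    or_iff_not_imp_left.mpr fun hr => ?_
  obtain ⟨n, u, rfl⟩ := IsDiscreteValuationRing.eq_unit_mul_pow_irreducible hr hϖ
  obtain ⟨x, rfl⟩ := p.mkQ_surjective z
  rw [← map_smul, Submodule.mkQ_apply, Submodule.Quotient.mk_eq_zero, mul_smul] at hrz
  rw [Submodule.mkQ_apply, Submodule.Quotient.mk_eq_zero]
  exact hpow n x ((p.smul_mem_iff' u).mp hrz)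

/-- `{x | ϖ ^ c • x ∈ q}`, for `c` where these submodules stabilise, is saturated and hence a
direct summand. -/
theorem Submodule.exists_linearMap_apply_eq_pow_smul [Module.Finite R M] (hϖ : Irreducible ϖ)
    (q : Submodule R M) : ∃ (c : ℕ) (r : M →ₗ[R] q), ∀ x : q, r x = ϖ ^ c • x := by
  let s (n : ℕ) : Submodule R M := q.comap (ϖ ^ n • LinearMap.id)
  have hs : Monotone s := fun m n hmn x hx => by
    simpa [s, ← pow_sub_mul_pow ϖ hmn, mul_smul] using q.smul_mem (ϖ ^ (n - m)) hx
  obtain ⟨c, hc⟩ := monotone_stabilizes_iff_noetherian.mpr inferInstance ⟨s, hs⟩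
  have hc : s (c + 1) = s c := (hc (c + 1) c.le_succ).symm
  have : Module.IsTorsionFree R (M ⧸ s c) := by
    refine Submodule.isTorsionFree_quotient_of_smul_mem hϖ fun x hx => ?_
    rw [← hc]
    simpa [s, pow_succ', mul_smul] using hx
  obtain ⟨ρ, hρ⟩ := (s c).exists_retraction
  refine ⟨c, LinearMap.codRestrict q (ϖ ^ c • (s c).subtype ∘ₗ ρ) fun x => (ρ x).2, fun x => ?_⟩
  have hx : (x : M) ∈ s c := by simpa [s] using q.smul_mem (ϖ ^ c) x.2
  have hρx : ρ x = ⟨x, hx⟩ := LinearMap.congr_fun hρ ⟨x, hx⟩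
  ext
  change ϖ ^ c • ((ρ x : s c) : M) = _
  rw [hρx]
  rfl

theorem LinearMap.exists_comp_eq_pow_smul {N P : Type*} [AddCommGroup N] [Module R N]
    [AddCommGroup P] [Module R P] [Module.Finite R N] (hϖ : Irreducible ϖ) (f : M →ₗ[R] N)
    (d : M →ₗ[R] P) (h : LinearMap.ker f ≤ LinearMap.ker d) :
    ∃ (c : ℕ) (d' : N →ₗ[R] P), ∀ x, d' (f x) = ϖ ^ c • d x := by
  obtain ⟨c, r, hr⟩ := (LinearMap.range f).exists_linearMap_apply_eq_pow_smul hϖ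
  refine ⟨c, (LinearMap.ker f).liftQ d h ∘ₗ f.quotKerEquivRange.symm.toLinearMap ∘ₗ r, fun x => ?_⟩
  rw [LinearMap.comp_apply, LinearMap.comp_apply, hr ⟨f x, f.mem_range_self x⟩, map_smul,
    map_smul, LinearEquiv.coe_coe, f.quotKerEquivRange_symm_apply_image]
  rfl

end DVR

section PowerSeries

variable {k : Type*} [Field k]

theorem PowerSeries.eq_zero_of_forall_X_pow_smul {M : Type*} [AddCommGroup M] [Module k⟦X⟧ M]
    [Module.Free k⟦X⟧ M] (z : M) (h : ∀ n : ℕ, ∃ y : M, z = (X : k⟦X⟧) ^ n • y) : z = 0 := by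
  let b := Module.Free.chooseBasis k⟦X⟧ M
  refine b.repr.injective (Finsupp.ext fun i => PowerSeries.ext fun m => ?_)
  obtain ⟨y, rfl⟩ := h (m + 1)
  have hdvd : (X : k⟦X⟧) ^ (m + 1) ∣ b.repr ((X : k⟦X⟧) ^ (m + 1) • y) i := by simp
  simpa using X_pow_dvd_iff.mp hdvd m m.lt_succ_self

variable {E F : Type*} [AddCommGroup E] [Module k E] [Module k⟦X⟧ E] [IsScalarTower k k⟦X⟧ E]
  [AddCommGroup F] [Module k F] [Module k⟦X⟧ F] [IsScalarTower k k⟦X⟧ F] [Module.Free k⟦X⟧ F]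

/-- `g (f • x) - f • g x` is divisible by every `X ^ n` (split `f = f(0) + X f'`), and free
modules are `X`-adically separated. -/
theorem LinearMap.map_smul_of_map_X_smul (g : E →ₗ[k] F)
    (hg : ∀ x, g ((X : k⟦X⟧) • x) = (X : k⟦X⟧) • g x) (f : k⟦X⟧) (x : E) :
    g (f • x) = f • g x := by
  have key : ∀ (n : ℕ) (f : k⟦X⟧) (x : E), ∃ y, g (f • x) - f • g x = (X : k⟦X⟧) ^ n • y := by
    intro n
    induction n with
    | zero => exact fun f x => ⟨_, (one_smul _ _).symm⟩
    | succ n ih =>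
      intro f x
      obtain ⟨f', hf'⟩ : X ∣ f - algebraMap k k⟦X⟧ (constantCoeff f) :=
        X_dvd_iff.mpr (by simp [algebraMap_eq])
      obtain ⟨y, hy⟩ := ih f' x
      refine ⟨y, ?_⟩
      rw [sub_eq_iff_eq_add.mp hf', add_smul, add_smul, algebraMap_smul, algebraMap_smul,
        mul_smul, mul_smul, map_add, hg, map_smul g (constantCoeff f), pow_succ', mul_smul, ← hy,
        smul_sub]
      abel
  exact sub_eq_zero.mp (eq_zero_of_forall_X_pow_smul _ fun n => key n f x)

@[simps]
def LinearMap.powerSeriesLinear (g : E →ₗ[k] F)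
    (hg : ∀ x, g ((X : k⟦X⟧) • x) = (X : k⟦X⟧) • g x) : E →ₗ[k⟦X⟧] F where
  toFun := g
  map_add' := g.map_add
  map_smul' := g.map_smul_of_map_X_smul hg

end PowerSeries

namespace ABMod

theorem a_X_pow_smul (F : ABMod) (n : ℕ) (v : F.carrier) :
    F.a ((X : ℂ⟦X⟧) ^ n • v) = (X : ℂ⟦X⟧) ^ n • F.a v + (n : ℂ) • (X : ℂ⟦X⟧) ^ (n + 1) • v := by
  induction n with
  | zero => simp
  | succ n ih =>
    rw [pow_succ', mul_smul, F.comm, ih, smul_add, smul_comm (X : ℂ⟦X⟧) (n : ℂ), ← mul_smul,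
      ← mul_smul, ← mul_smul, ← pow_succ', ← pow_succ', show (X * X : ℂ⟦X⟧) * X ^ n = X ^ (n + 2)
      by ring]
    push_cast
    rw [add_smul, one_smul, add_assoc]

def punit : ABMod where
  carrier := PUnit
  a := 0
  comm _ := rfl

theorem simplePole_punit : punit.SimplePole := fun _ => ⟨0, rfl⟩

protected def prod (F G : ABMod) : ABMod where
  carrier := F.carrier × G.carrier
  a := F.a.prodMap G.a
  comm z := Prod.ext (F.comm z.1) (G.comm z.2)

theorem SimplePole.prod {F G : ABMod} (hF : F.SimplePole) (hG : G.SimplePole) :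
    (F.prod G).SimplePole := fun z => by
  obtain ⟨u, hu⟩ := hF z.1
  obtain ⟨v, hv⟩ := hG z.2
  exact ⟨(u, v), Prod.ext hu hv⟩

/-- The term `- n b v` compensates `a (b ^ n v) = b ^ n a v + n b ^ (n + 1) v`, so that
`x ↦ (G₁ x, b ^ n G x)` intertwines `a` as soon as `δ ∘ G₁ = b ^ (n - 1) (G ∘ a - a ∘ G)`. -/
def twistedProd (F₁ F : ABMod) (n : ℕ) (δ : F₁.carrier →ₗ[ℂ⟦X⟧] F.carrier) : ABMod where
  carrier := F₁.carrier × F.carrier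
  a :=
    { toFun z := (F₁.a z.1, F.a z.2 - (n : ℂ) • (X : ℂ⟦X⟧) • z.2 + (X : ℂ⟦X⟧) • δ z.1)
      map_add' z w := by
        ext <;> simp only [Prod.fst_add, Prod.snd_add, map_add, smul_add]
        abel
      map_smul' c z := by
        ext <;> simp [smul_sub, smul_add, smul_comm c (X : ℂ⟦X⟧), smul_comm c (n : ℂ)] }
  comm z := by
    ext
    · exact F₁.comm z.1
    · simp only [LinearMap.coe_mk, AddHom.coe_mk, Prod.smul_fst, Prod.smul_snd, Prod.snd_add,
        F.comm, map_smul]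
      rw [smul_add, smul_sub, smul_comm (X : ℂ⟦X⟧) (n : ℂ), mul_smul]
      abel

theorem SimplePole.twistedProd {F₁ F : ABMod} (hF₁ : F₁.SimplePole) (hF : F.SimplePole) (n : ℕ)
    (δ : F₁.carrier →ₗ[ℂ⟦X⟧] F.carrier) : (F₁.twistedProd F n δ).SimplePole := fun z => by
  obtain ⟨u, hu⟩ := hF₁ z.1
  obtain ⟨v, hv⟩ := hF z.2
  refine ⟨(u, v - (n : ℂ) • z.2 + δ z.1), Prod.ext hu ?_⟩
  change F.a z.2 - _ + _ = (X : ℂ⟦X⟧) • (v - (n : ℂ) • z.2 + δ z.1)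
  rw [hv, smul_add, smul_sub, smul_comm (X : ℂ⟦X⟧) (n : ℂ)]

end ABMod

section Regularity

variable {E : Type} [AddCommGroup E] [Module ℂ E] [Module ℂ⟦X⟧ E] [IsScalarTower ℂ ℂ⟦X⟧ E]
  {a : E →ₗ[ℂ] E}

theorem regularQuotient_ker {F : ABMod} (hF : F.SimplePole) (G : E →ₗ[ℂ⟦X⟧] F.carrier)
    (hG : ∀ x, G (a x) = F.a (G x)) : RegularQuotient E a (LinearMap.ker G) :=
  ⟨F, hF, G.restrictScalars ℂ, map_smul G X, hG, fun _ => Iff.rfl⟩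

theorem RegularQuotient.exists_linearMap {J : Submodule ℂ⟦X⟧ E} (hJ : RegularQuotient E a J) :
    ∃ F : ABMod, F.SimplePole ∧ ∃ G : E →ₗ[ℂ⟦X⟧] F.carrier,
      (∀ x, G (a x) = F.a (G x)) ∧ LinearMap.ker G = J := by
  obtain ⟨F, hF, g, hgX, hga, hker⟩ := hJ
  exact ⟨F, hF, g.powerSeriesLinear hgX, hga, Submodule.ext hker⟩

theorem regularQuotient_top : RegularQuotient E a ⊤ := by
  simpa using regularQuotient_ker (a := a) ABMod.simplePole_punit 0 fun _ => rfl

theorem RegularQuotient.inf {J K : Submodule ℂ⟦X⟧ E} (hJ : RegularQuotient E a J)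
    (hK : RegularQuotient E a K) : RegularQuotient E a (J ⊓ K) := by
  obtain ⟨F, hF, G, hGa, rfl⟩ := hJ.exists_linearMap
  obtain ⟨F', hF', G', hG'a, rfl⟩ := hK.exists_linearMap
  rw [← LinearMap.ker_prod]
  exact regularQuotient_ker (F := F.prod F') (hF.prod hF') (G.prod G')
    fun x => Prod.ext (hGa x) (hG'a x)

theorem RegularQuotient.map_mem {J : Submodule ℂ⟦X⟧ E} (hJ : RegularQuotient E a J) {x : E}
    (hx : x ∈ J) : a x ∈ J := by
  obtain ⟨F, -, G, hGa, rfl⟩ := hJ.exists_linearMap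
  simp_all

theorem RegularQuotient.isTorsionFree {J : Submodule ℂ⟦X⟧ E} (hJ : RegularQuotient E a J) :
    Module.IsTorsionFree ℂ⟦X⟧ (E ⧸ J) := by
  obtain ⟨F, -, G, -, rfl⟩ := hJ.exists_linearMap
  exact Function.Injective.moduleIsTorsionFree _
    (LinearMap.ker_eq_bot.mp (Submodule.ker_liftQ_eq_bot _ G le_rfl le_rfl)) (map_smul _)

theorem RegularQuotient.isNormal {J : Submodule ℂ⟦X⟧ E} (hJ : RegularQuotient E a J) :
    IsNormal E J := by
  have := hJ.isTorsionFree
  rintro x hx ⟨y, rfl⟩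
  refine ⟨y, ?_, rfl⟩
  simpa [← Submodule.Quotient.mk_eq_zero, X_ne_zero] using hx

theorem exists_minimal_regularQuotient [Module.Finite ℂ⟦X⟧ E] :
    ∃ I, RegularQuotient E a I ∧ ∀ J, RegularQuotient E a J → I ≤ J := by
  obtain ⟨I, hI, hmin⟩ := (measure fun J : Submodule ℂ⟦X⟧ E => Module.finrank ℂ⟦X⟧ J).wf.has_min
    {J | RegularQuotient E a J} ⟨⊤, regularQuotient_top⟩
  refine ⟨I, hI, fun J hJ => ?_⟩
  have hIJ : RegularQuotient E a (I ⊓ J) := hI.inf hJ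
  have := hIJ.isTorsionFree
  exact (Submodule.le_of_le_of_finrank_le inf_le_left (not_lt.mp (hmin _ hIJ))).trans inf_le_right

variable (a) in
def defect {F : ABMod} (G : E →ₗ[ℂ⟦X⟧] F.carrier) : E →ₗ[ℂ] F.carrier :=
  G.restrictScalars ℂ ∘ₗ a - F.a ∘ₗ G.restrictScalars ℂ

theorem defect_X_smul
    (hcomm : ∀ x : E, a ((X : ℂ⟦X⟧) • x) = (X : ℂ⟦X⟧) • a x + ((X * X : ℂ⟦X⟧)) • x)
    {F : ABMod} (G : E →ₗ[ℂ⟦X⟧] F.carrier) (x : E) :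
    defect a G ((X : ℂ⟦X⟧) • x) = (X : ℂ⟦X⟧) • defect a G x := by
  simp only [defect, LinearMap.sub_apply, LinearMap.comp_apply, LinearMap.restrictScalars_apply,
    hcomm, map_add, map_smul, F.comm, smul_sub]
  abel

theorem RegularQuotient.inf_ker
    (hcomm : ∀ x : E, a ((X : ℂ⟦X⟧) • x) = (X : ℂ⟦X⟧) • a x + ((X * X : ℂ⟦X⟧)) • x)
    {I : Submodule ℂ⟦X⟧ E} (hI : RegularQuotient E a I) {F : ABMod} (hF : F.SimplePole)
    (G : E →ₗ[ℂ⟦X⟧] F.carrier) (hG : ∀ x ∈ I, G (a x) = F.a (G x)) :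
    RegularQuotient E a (I ⊓ LinearMap.ker G) := by
  obtain ⟨F₁, hF₁, G₁, hG₁a, rfl⟩ := hI.exists_linearMap
  obtain ⟨c, δ, hδ⟩ := G₁.exists_comp_eq_pow_smul X_prime.irreducible
    ((defect a G).powerSeriesLinear (defect_X_smul hcomm G))
    fun x hx => by simp [defect, hG x hx]
  have hker : LinearMap.ker (G₁.prod ((X : ℂ⟦X⟧) ^ (c + 1) • G)) =
      LinearMap.ker G₁ ⊓ LinearMap.ker G := by
    ext x
    simp [X_ne_zero]
  rw [← hker]
  refine regularQuotient_ker (F := F₁.twistedProd F (c + 1) δ) (hF₁.twistedProd hF _ _) _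
    fun x => Prod.ext (hG₁a x) ?_
  change (X : ℂ⟦X⟧) ^ (c + 1) • G (a x) = F.a ((X : ℂ⟦X⟧) ^ (c + 1) • G x)
    - ((c + 1 : ℕ) : ℂ) • (X : ℂ⟦X⟧) • (X : ℂ⟦X⟧) ^ (c + 1) • G x + (X : ℂ⟦X⟧) • δ (G₁ x)
  rw [hδ, F.a_X_pow_smul]
  simp only [LinearMap.powerSeriesLinear_apply, defect, LinearMap.sub_apply,
    LinearMap.comp_apply, LinearMap.restrictScalars_apply, smul_smul, ← pow_succ', smul_sub]
  abel

theorem totallyIrregular_of_minimal [Module.Finite ℂ⟦X⟧ E]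
    (hcomm : ∀ x : E, a ((X : ℂ⟦X⟧) • x) = (X : ℂ⟦X⟧) • a x + ((X * X : ℂ⟦X⟧)) • x)
    {I : Submodule ℂ⟦X⟧ E} (hI : RegularQuotient E a I)
    (hmin : ∀ J, RegularQuotient E a J → I ≤ J) : TotallyIrregular E a I := by
  intro F hF g hgX hga
  have := hI.isTorsionFree
  obtain ⟨ρ, hρ⟩ := I.exists_retraction
  set G := g.powerSeriesLinear hgX ∘ₗ ρ
  have hGI : ∀ x : I, G x = g x := fun x => congrArg g (LinearMap.congr_fun hρ x)
  have hGa : ∀ x ∈ I, G (a x) = F.a (G x) := fun x hx => by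
    rw [hGI ⟨x, hx⟩, hGI ⟨a x, hI.map_mem hx⟩]
    exact hga ⟨x, hx⟩ _
  have hle := hmin _ (hI.inf_ker hcomm hF G hGa)
  ext x
  simpa [hGI] using (hle x.2).2

end Regularity

end

theorem exists_smallest_irregularity_submodule_general
    (E : Type) [AddCommGroup E] [Module ℂ E] [Module (PowerSeries ℂ) E]
    [IsScalarTower ℂ (PowerSeries ℂ) E]
    [Module.Finite (PowerSeries ℂ) E]
    (a : E →ₗ[ℂ] E)
    (hcomm : ∀ x : E, a ((X : ℂ⟦X⟧) • x) = (X : ℂ⟦X⟧) • a x + ((X * X : ℂ⟦X⟧)) • x) :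
    ∃ I : Submodule (PowerSeries ℂ) E,
      (∀ x ∈ I, a x ∈ I) ∧ IsNormal E I ∧ RegularQuotient E a I ∧
      (∀ J : Submodule (PowerSeries ℂ) E,
        (∀ x ∈ J, a x ∈ J) → IsNormal E J → RegularQuotient E a J → I ≤ J) ∧
      TotallyIrregular E a I := by
  obtain ⟨I, hI, hmin⟩ := exists_minimal_regularQuotient (a := a)
  exact ⟨I, fun _ => hI.map_mem, hI.isNormal, hI, fun J _ _ hJ => hmin J hJ,
    totallyIrregular_of_minimal hcomm hI hmin⟩

/-- Let `E` be a local (a,b)-module (`a^N·E ⊆ b·E` for some `N ≥ 1`).  Then there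
is a smallest normal (`a`- and `b`-stable) submodule `I ⊆ E` such that `E/I` is
regular, and this `I` is totally irregular. -/
theorem exists_smallest_irregularity_submodule
    (E : Type) [AddCommGroup E] [Module ℂ E] [Module (PowerSeries ℂ) E]
    [IsScalarTower ℂ (PowerSeries ℂ) E]
    [Module.Free (PowerSeries ℂ) E] [Module.Finite (PowerSeries ℂ) E]
    (a : E →ₗ[ℂ] E)
    (hcomm : ∀ x : E, a ((X : ℂ⟦X⟧) • x) = (X : ℂ⟦X⟧) • a x + ((X * X : ℂ⟦X⟧)) • x)
    (hlocal : ∃ N : ℕ, 1 ≤ N ∧ ∀ x : E, ∃ y : E,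
      ((a : Module.End ℂ E) ^ N) x = (X : ℂ⟦X⟧) • y) :
    ∃ I : Submodule (PowerSeries ℂ) E,
      (∀ x ∈ I, a x ∈ I) ∧ IsNormal E I ∧ RegularQuotient E a I ∧
      (∀ J : Submodule (PowerSeries ℂ) E,
        (∀ x ∈ J, a x ∈ J) → IsNormal E J → RegularQuotient E a J → I ≤ J) ∧
      TotallyIrregular E a I :=
  exists_smallest_irregularity_submodule_general E a hcomm
end

section
/- Let P ∈ Ã be a monic polynomial in a of degree d with coefficients in C[[b]], and suppose the initial homogeneous form of P in (a,b) equals b^q for some integer q < d. Then the (a,b)-module E := Ã/Ã·P is totally irregular: every Ã-linear map f : E → F to a simple pole (a,b)-module F is zero. -/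
/-!
The relation `a b = b a + b²` and the simple pole `a F ⊆ b F` give
`a (bⁿ F) ⊆ bⁿ⁺¹ F`, hence `aᵏ (bⁿ F) ⊆ bⁿ⁺ᵏ F`. Since the initial form of `P` is `b^q`, each
`c_k` with `k ≥ 1` is divisible by `b^(q+1-k)` and `c_0 ≡ b^q` mod `b^(q+1)`; together with
`d > q` this gives `P·x ≡ b^q·x` mod `b^(q+n+1) F` for `x ∈ bⁿ F`. So if `P·x = 0` and `x = bⁿ u`,
then `b^(q+n) u ∈ b^(q+n+1) F`, and torsion-freeness gives `u ∈ b F`, i.e. `x ∈ bⁿ⁺¹ F`.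
Thus `x ∈ ⋂ₙ bⁿ F`, which vanishes in a free `ℂ⟦b⟧`-module.
In the general lemmas `t` plays the role of `b`, and `bⁿ F` is the submodule `t ^ n • ⊤`.
-/

open PowerSeries Pointwise

namespace Submodule

variable {R M : Type*} [CommRing R] [AddCommGroup M] [Module R M]

lemma mem_smul_top_iff_exists {r : R} {m : M} :
    m ∈ r • (⊤ : Submodule R M) ↔ ∃ y, r • y = m := by
  simp [mem_smul_pointwise_iff_exists]

lemma smul_mem_smul_top (r : R) (y : M) : r • y ∈ r • (⊤ : Submodule R M) :=
  smul_mem_pointwise_smul y r ⊤ trivial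

lemma smul_mem_pow_smul_top {t : R} {i j : ℕ} {y : M} (hy : y ∈ t ^ j • (⊤ : Submodule R M)) :
    t ^ i • y ∈ t ^ (i + j) • (⊤ : Submodule R M) := by
  obtain ⟨z, rfl⟩ := mem_smul_top_iff_exists.1 hy
  rw [smul_smul, ← pow_add]
  exact smul_mem_smul_top _ _

lemma pow_smul_top_antitone (t : R) : Antitone fun n : ℕ ↦ t ^ n • (⊤ : Submodule R M) := by
  intro m n hmn y hy
  obtain ⟨z, rfl⟩ := mem_smul_top_iff_exists.1 hy
  rw [← Nat.add_sub_cancel' hmn, pow_add, mul_smul]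
  exact smul_mem_smul_top _ _

lemma mem_smul_top_of_pow_smul_mem [Module.IsTorsionFree R M] {t : R} (ht : IsRegular t)
    {k : ℕ} {u : M} (h : t ^ k • u ∈ t ^ (k + 1) • (⊤ : Submodule R M)) :
    u ∈ t • (⊤ : Submodule R M) := by
  obtain ⟨w, hw⟩ := mem_smul_top_iff_exists.1 h
  rw [pow_succ, mul_smul] at hw
  rw [← (ht.pow k).smul_right_injective M hw]
  exact smul_mem_smul_top _ _

lemma eq_zero_of_forall_mem_pow_smul_top [Module.Free R M] {t : R}
    (ht : ∀ r : R, (∀ n, t ^ n ∣ r) → r = 0) {z : M}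
    (hz : ∀ n, z ∈ t ^ n • (⊤ : Submodule R M)) : z = 0 := by
  set B := Module.Free.chooseBasis R M
  suffices B.repr z = 0 by simpa using congrArg B.repr.symm this
  ext i
  refine ht _ fun n ↦ ?_
  obtain ⟨y, rfl⟩ := mem_smul_top_iff_exists.1 (hz n)
  simp

end Submodule

open Submodule

section SimplePole

variable {R M : Type*} [CommRing R] [AddCommGroup M] [Module R M] {t : R} {a : M → M}

lemma map_mem_pow_succ_smul_top (hcomm : ∀ y, a (t • y) = t • a y + (t * t) • y)
    (hpole : ∀ y, a y ∈ t • (⊤ : Submodule R M)) {n : ℕ} {y : M}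
    (hy : y ∈ t ^ n • (⊤ : Submodule R M)) : a y ∈ t ^ (n + 1) • (⊤ : Submodule R M) := by
  induction n generalizing y with
  | zero => simpa using hpole y
  | succ n ih =>
    obtain ⟨z, rfl⟩ := mem_smul_top_iff_exists.1 hy
    obtain ⟨w, hw⟩ := mem_smul_top_iff_exists.1 (ih (smul_mem_smul_top (t ^ n) z))
    rw [pow_succ' t n, mul_smul, hcomm, ← hw, smul_smul, smul_smul,
      show t * t ^ (n + 1) = t ^ (n + 2) by ring, show t * t * t ^ n = t ^ (n + 2) by ring,
      ← smul_add]
    exact smul_mem_smul_top _ _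

lemma iterate_mem_pow_add_smul_top (hcomm : ∀ y, a (t • y) = t • a y + (t * t) • y)
    (hpole : ∀ y, a y ∈ t • (⊤ : Submodule R M)) (k : ℕ) {n : ℕ} {y : M}
    (hy : y ∈ t ^ n • (⊤ : Submodule R M)) : a^[k] y ∈ t ^ (n + k) • (⊤ : Submodule R M) := by
  induction k with
  | zero => simpa using hy
  | succ k ih =>
    rw [Function.iterate_succ_apply']
    exact map_mem_pow_succ_smul_top hcomm hpole ih

end SimplePole

section MonicOperator

variable {R M : Type*} [CommRing R] [AddCommGroup M] [Module R M]

def monicApply (d : ℕ) (c : ℕ → R) (a : M → M) (x : M) : M :=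
  a^[d] x + ∑ k ∈ Finset.range d, c k • a^[k] x

variable {t : R} {a : M → M} {d q : ℕ} {c : ℕ → R}

lemma monicApply_sub_pow_smul_mem (hcomm : ∀ y, a (t • y) = t • a y + (t * t) • y)
    (hpole : ∀ y, a y ∈ t • (⊤ : Submodule R M)) (hqd : q < d)
    (hc : ∀ k < d, t ^ (q + 1 - k) ∣ c k - if k = 0 then t ^ q else 0) {n : ℕ} {x : M}
    (hx : x ∈ t ^ n • (⊤ : Submodule R M)) :
    monicApply d c a x - t ^ q • x ∈ t ^ (q + n + 1) • (⊤ : Submodule R M) := by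
  have hlead : a^[d] x ∈ t ^ (q + n + 1) • (⊤ : Submodule R M) :=
    pow_smul_top_antitone t (by omega) (iterate_mem_pow_add_smul_top hcomm hpole d hx)
  have hterm : ∀ k ∈ Finset.range d, c k • a^[k] x - (if k = 0 then t ^ q • x else 0) ∈
      t ^ (q + n + 1) • (⊤ : Submodule R M) := by
    intro k hk
    obtain ⟨g, hg⟩ := hc k (Finset.mem_range.1 hk)
    have hsplit : c k • a^[k] x - (if k = 0 then t ^ q • x else 0) =
        g • t ^ (q + 1 - k) • a^[k] x := by
      rw [smul_comm, smul_smul, ← hg]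
      split_ifs with h <;> simp [h, sub_smul]
    rw [hsplit]
    exact smul_mem _ g (pow_smul_top_antitone t (by omega)
      (smul_mem_pow_smul_top (iterate_mem_pow_add_smul_top hcomm hpole k hx)))
  have hsum := sum_mem hterm
  rw [Finset.sum_sub_distrib,
    Finset.sum_ite_eq_of_mem' _ _ _ (Finset.mem_range.2 (by omega))] at hsum
  convert add_mem hlead hsum using 1
  rw [monicApply]
  abel

lemma mem_pow_succ_smul_top_of_monicApply_eq_zero [Module.IsTorsionFree R M] (ht : IsRegular t)
    (hcomm : ∀ y, a (t • y) = t • a y + (t * t) • y)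
    (hpole : ∀ y, a y ∈ t • (⊤ : Submodule R M)) (hqd : q < d)
    (hc : ∀ k < d, t ^ (q + 1 - k) ∣ c k - if k = 0 then t ^ q else 0) {x : M}
    (hP : monicApply d c a x = 0) {n : ℕ} (hx : x ∈ t ^ n • (⊤ : Submodule R M)) :
    x ∈ t ^ (n + 1) • (⊤ : Submodule R M) := by
  have hcong := monicApply_sub_pow_smul_mem hcomm hpole hqd hc hx
  obtain ⟨u, rfl⟩ := mem_smul_top_iff_exists.1 hx
  rw [hP, zero_sub, neg_mem_iff, smul_smul, ← pow_add] at hcong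
  obtain ⟨w, rfl⟩ := mem_smul_top_iff_exists.1 (mem_smul_top_of_pow_smul_mem ht hcong)
  rw [smul_smul, ← pow_succ]
  exact smul_mem_smul_top _ _

theorem eq_zero_of_monicApply_eq_zero [Module.Free R M] (ht : IsRegular t)
    (ht_sep : ∀ r : R, (∀ n, t ^ n ∣ r) → r = 0)
    (hcomm : ∀ y, a (t • y) = t • a y + (t * t) • y)
    (hpole : ∀ y, a y ∈ t • (⊤ : Submodule R M)) (hqd : q < d)
    (hc : ∀ k < d, t ^ (q + 1 - k) ∣ c k - if k = 0 then t ^ q else 0) {x : M}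
    (hP : monicApply d c a x = 0) : x = 0 := by
  refine eq_zero_of_forall_mem_pow_smul_top ht_sep fun n ↦ ?_
  induction n with
  | zero => simp
  | succ n ih => exact mem_pow_succ_smul_top_of_monicApply_eq_zero ht hcomm hpole hqd hc hP ih

end MonicOperator

lemma PowerSeries.eq_zero_of_forall_X_pow_dvd {K : Type*} [CommRing K] (φ : K⟦X⟧)
    (h : ∀ n, X ^ n ∣ φ) : φ = 0 := by
  ext m
  exact X_pow_dvd_iff.1 (h (m + 1)) m m.lt_succ_self

lemma PowerSeries.X_pow_dvd_sub_of_initialForm {K : Type*} [CommRing K] {d q : ℕ}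
    {c : ℕ → K⟦X⟧} (hval : ∀ k m : ℕ, k < d → k + m < q → coeff m (c k) = 0)
    (hinit : ∀ k m : ℕ, k < d → k + m = q → coeff m (c k) = if k = 0 then 1 else 0)
    {k : ℕ} (hk : k < d) : X ^ (q + 1 - k) ∣ c k - if k = 0 then X ^ q else 0 := by
  rw [X_pow_dvd_iff]
  intro m hm
  rcases (show k + m < q ∨ k + m = q by omega) with hlt | heq
  · split_ifs <;> simp [hval k m hk hlt, coeff_X_pow]
    omega
  · split_ifs with hk0
    · subst hk0
      simp [hinit 0 m hk heq, coeff_X_pow, ← heq]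
    · simp [hinit k m hk heq, hk0]

/-- Let `P = a^d + Σ_{k<d} c_k(b)·a^k ∈ Ã` be monic in `a` of degree `d` with
coefficients `c_k ∈ ℂ⟦b⟧`, and suppose the initial homogeneous form of `P` in
`(a,b)` equals `b^q` for some `q < d`.  Then the (a,b)-module `E := Ã/Ã·P` is
totally irregular: every `Ã`-linear map `E → F` to a simple pole (a,b)-module `F`
is zero.  Equivalently (a map `E → F` is determined by the image `x` of `1`,
which satisfies `P·x = 0`): for every simple pole (a,b)-module `F` and every
`x ∈ F` with `P·x = 0`, one has `x = 0`. -/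
theorem quotient_by_P_totally_irregular
    (d q : ℕ) (hqd : q < d) (c : ℕ → ℂ⟦X⟧)
    -- the initial form of `P` in (a,b) is `b^q` : all terms of total degree `< q`
    -- vanish and the degree-`q` homogeneous part is exactly `b^q`
    (hval : ∀ k m : ℕ, k < d → k + m < q → PowerSeries.coeff m (c k) = 0)
    (hinit : ∀ k m : ℕ, k < d → k + m = q →
      PowerSeries.coeff m (c k) = if k = 0 then 1 else 0) :
    ∀ (F : Type) (_ : AddCommGroup F) (_ : Module ℂ F) (_ : Module (PowerSeries ℂ) F)
      (_ : IsScalarTower ℂ (PowerSeries ℂ) F)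
      (_ : Module.Free (PowerSeries ℂ) F) (_ : Module.Finite (PowerSeries ℂ) F)
      (a : Module.End ℂ F)
      (_ : ∀ x : F, a ((X : ℂ⟦X⟧) • x) = (X : ℂ⟦X⟧) • a x + ((X * X : ℂ⟦X⟧)) • x)
      -- `F` has a simple pole : `a·F ⊆ b·F`
      (_ : ∀ x : F, ∃ y : F, a x = (X : ℂ⟦X⟧) • y)
      (x : F),
      (a ^ d) x + ∑ k ∈ Finset.range d, c k • ((a ^ k) x) = 0 → x = 0 := by
  intro F _ _ _ _ _ _ a hcomm hpole x hP
  have hpole' : ∀ y, a y ∈ (X : ℂ⟦X⟧) • (⊤ : Submodule ℂ⟦X⟧ F) := fun y ↦ by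
    obtain ⟨z, hz⟩ := hpole y
    exact hz ▸ smul_mem_smul_top _ _
  exact eq_zero_of_monicApply_eq_zero (IsRegular.of_ne_zero X_ne_zero)
    eq_zero_of_forall_X_pow_dvd hcomm hpole' hqd
    (fun k hk ↦ X_pow_dvd_sub_of_initialForm hval hinit hk)
    (by simpa only [monicApply, Module.End.pow_apply] using hP)
end

section
/- Let P ∈ Ã be monic in a of degree d+h with h ≥ 1, congruent to a^{d+h} modulo b·Ã, and with initial form in (a,b) of degree d equal to ρ·b^q·P_{d−q} with ρ ∈ C*, 0 ≤ q ≤ d, and P_{d−q} homogeneous monic in a of degree d−q. Then there exist Z, Q ∈ Ã, polynomials in a of degrees q+h and at most d−q−1 respectively, with (a,b)-valuations at least q+1 and d−q+1 respectively, such that (ρ·b^q + Z)·(P_{d−q} + Q) = P in Ã. -/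
/- We model the relevant elements of the completion `Ã` of `ℂ⟨a,b⟩`
(relation `ab − ba = b²`) — namely the polynomials in `a` with left coefficients
in `ℂ⟦b⟧` — by `Polynomial ℂ⟦X⟧`, where the polynomial variable stands for `a`
and the power series variable for `b`, together with the (noncommutative)
multiplication determined by `a·c(b) = c(b)·a + b²·c'(b)`. -/

/-- Left multiplication by `a` : `a·(c(b)·a^k) = c(b)·a^{k+1} + b²·c'(b)·a^k`. -/
noncomputable def aMul (p : Polynomial (PowerSeries ℂ)) : Polynomial (PowerSeries ℂ) :=
  Polynomial.X * p +
    p.sum fun k c =>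
      Polynomial.C ((PowerSeries.X : PowerSeries ℂ) ^ 2 * PowerSeries.derivativeFun c) *
        Polynomial.X ^ k

/-- The multiplication of `Ã` on polynomials in `a` with `ℂ⟦b⟧` coefficients :
`(Σ_k c_k(b)·a^k)·Q = Σ_k c_k(b)·(a^k·Q)`. -/
noncomputable def abMul (p q : Polynomial (PowerSeries ℂ)) : Polynomial (PowerSeries ℂ) :=
  p.sum fun k c => Polynomial.C c * (aMul^[k] q)

/-!
Write `D = d - q` and `P_D` for the homogeneous factor. Multiplication in `Ã` preserves the
total `(a,b)`-degree, so `(ρbᵠ + Z)(P_D + Q) = P` is solved one total degree `n > d` at a time: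
the unknown parts `Z_{n-D}` and `Q_{n-q}` enter the degree-`n` equation only through
`Z_{n-D}·P_D + ρbᵠ·Q_{n-q}`, all other terms being known from lower degrees. As `P_D` is monic
in `a`, dividing the known right-hand side on the right by `P_D` (downwards in the `a`-degree)
gives `Z_{n-D}`; the remainder is homogeneous of `a`-degree `< D`, hence divisible by `bᵠ`,
which gives `Q_{n-q}`. In degree `d` the equation is the hypothesis on the initial form, and the
coefficient of `a^{q+h}` in `Z` is the leading coefficient `1` of `P`.
-/

namespace SecondFactorization

open Polynomial Finset

section Operators

variable {R : Type*} [CommSemiring R]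

/-- On coefficient arrays `f k m` (coefficient of `bᵐaᵏ`), left multiplication by `a` acts as
`aShift + bDeriv`, where `bDeriv` is the derivation `δ = b²·d/db`. -/
def aShift : Module.End R (ℕ → ℕ → R) where
  toFun f k m := if 1 ≤ k then f (k - 1) m else 0
  map_add' f g := by ext k m; split_ifs <;> simp [*]
  map_smul' c f := by ext k m; split_ifs <;> simp [*]

def bDeriv : Module.End R (ℕ → ℕ → R) where
  toFun f k m := ((m - 1 : ℕ) : R) * f k (m - 1)
  map_add' f g := by ext k m; simp [mul_add]
  map_smul' c f := by ext k m; simp [mul_left_comm]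

lemma aShift_apply (f : ℕ → ℕ → R) (k m : ℕ) :
    aShift f k m = if 1 ≤ k then f (k - 1) m else 0 := rfl

lemma bDeriv_apply (f : ℕ → ℕ → R) (k m : ℕ) :
    bDeriv f k m = ((m - 1 : ℕ) : R) * f k (m - 1) := rfl

lemma commute_bDeriv_aShift : Commute (bDeriv : Module.End R (ℕ → ℕ → R)) aShift := by
  ext f k m
  simp only [Module.End.mul_apply, aShift_apply, bDeriv_apply]
  split_ifs <;> simp

lemma aShift_pow_apply (r : ℕ) (f : ℕ → ℕ → R) (k m : ℕ) :
    (aShift ^ r) f k m = if r ≤ k then f (k - r) m else 0 := by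
  induction r generalizing k with
  | zero => simp
  | succ r ih =>
    rw [pow_succ', Module.End.mul_apply, aShift_apply, ih]
    split_ifs <;> first | rfl | omega | (congr 1; omega)

lemma bDeriv_pow_apply (i : ℕ) (f : ℕ → ℕ → R) (k m : ℕ) :
    (bDeriv ^ i) f k m = ((m - 1).descFactorial i : R) * f k (m - i) := by
  induction i generalizing m with
  | zero => simp
  | succ i ih =>
    rw [pow_succ', Module.End.mul_apply, bDeriv_apply, ih]
    rcases m with _ | _ | m
    · simp
    · simp
    · simp only [Nat.add_sub_cancel, Nat.succ_descFactorial_succ]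
      push_cast
      ring

end Operators

noncomputable def bicoeff (p : Polynomial (PowerSeries ℂ)) (k m : ℕ) : ℂ :=
  PowerSeries.coeff m (p.coeff k)

lemma ext_bicoeff {p p' : Polynomial (PowerSeries ℂ)} (h : bicoeff p = bicoeff p') : p = p' :=
  Polynomial.ext fun k => PowerSeries.ext fun m => congrFun (congrFun h k) m

lemma bicoeff_add (p p' : Polynomial (PowerSeries ℂ)) :
    bicoeff (p + p') = bicoeff p + bicoeff p' := by
  ext k m
  simp [bicoeff]

lemma coeff_aMul (p : Polynomial (PowerSeries ℂ)) (k : ℕ) :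
    (aMul p).coeff k = (if 1 ≤ k then p.coeff (k - 1) else 0)
      + PowerSeries.X ^ 2 * PowerSeries.derivative ℂ (p.coeff k) := by
  rw [aMul, coeff_add, Polynomial.sum_def, finsetSum_coeff]
  simp only [coeff_C_mul_X_pow]
  rw [sum_ite_eq]
  congr 1
  · rcases k with _ | k
    · simp
    · simp [coeff_X_mul]
  · split_ifs with hk
    · rfl
    · rw [notMem_support_iff.mp hk, map_zero, mul_zero]

lemma bicoeff_aMul (p : Polynomial (PowerSeries ℂ)) :
    bicoeff (aMul p) = (aShift + bDeriv : Module.End ℂ _) (bicoeff p) := by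
  ext k m
  simp only [bicoeff, coeff_aMul, map_add, LinearMap.add_apply, Pi.add_apply, aShift_apply,
    bDeriv_apply, PowerSeries.coeff_X_pow_mul']
  congr 1
  · split_ifs <;> simp
  · split_ifs with hm
    · rw [PowerSeries.coeff_derivative, show m - 2 + 1 = m - 1 by omega, mul_comm]
      congr 1
      norm_cast
      omega
    · interval_cases m <;> simp

lemma bicoeff_iterate_aMul (V : Polynomial (PowerSeries ℂ)) (j k μ : ℕ) :
    bicoeff (aMul^[j] V) k μ = ∑ i ∈ range (j + 1),
      if j ≤ k + i ∧ i ≤ μ then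
        (j.choose i : ℂ) * (μ - 1).descFactorial i * bicoeff V (k + i - j) (μ - i) else 0 := by
  have hpow : bicoeff (aMul^[j] V) = ((bDeriv + aShift : Module.End ℂ _) ^ j) (bicoeff V) := by
    rw [add_comm, Module.End.pow_apply]
    exact Function.Semiconj.iterate_right (fun p => bicoeff_aMul p) j V
  rw [hpow, commute_bDeriv_aShift.add_pow, LinearMap.sum_apply, Finset.sum_apply,
    Finset.sum_apply]
  refine sum_congr rfl fun i hi => ?_
  have hij : i ≤ j := Nat.lt_succ_iff.mp (mem_range.mp hi)
  rw [Module.End.mul_apply, Module.End.mul_apply, Module.End.natCast_apply, bDeriv_pow_apply,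
    aShift_pow_apply]
  by_cases hguard : j ≤ k + i ∧ i ≤ μ
  · rw [if_pos (by omega), if_pos hguard, show k - (j - i) = k + i - j by omega]
    simp only [Pi.smul_apply, nsmul_eq_mul]
    ring
  · rw [if_neg hguard]
    by_cases hk : j - i ≤ k
    · rw [if_pos hk, Nat.descFactorial_eq_zero_iff_lt.mpr (by omega)]
      simp
    · rw [if_neg hk, mul_zero]

section ArrayProduct

variable {R : Type*} [CommSemiring R]

/-- Coefficients of `U·V` in `Ã` for `U` of degree at most `N` in `a`, read off from
`aʲ·c = Σᵢ (j choose i)·δⁱ(c)·aʲ⁻ⁱ` with `δ = b²·d/db` and `δⁱ(bᵗ) = t(t+1)⋯(t+i-1)·bᵗ⁺ⁱ`. -/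
noncomputable def arrMul (N : ℕ) (f g : ℕ → ℕ → R) (k m : ℕ) : R :=
  ∑ j ∈ range (N + 1), ∑ s ∈ range (m + 1), ∑ i ∈ range (j + 1),
    if j ≤ k + i ∧ i + s ≤ m then
      (j.choose i : R) * (m - s - 1).descFactorial i * f j s * g (k + i - j) (m - s - i)
    else 0

lemma arrMul_add_left (N : ℕ) (f₁ f₂ g : ℕ → ℕ → R) :
    arrMul N (f₁ + f₂) g = arrMul N f₁ g + arrMul N f₂ g := by
  ext k m
  simp only [arrMul, Pi.add_apply, ← sum_add_distrib]
  refine sum_congr rfl fun _ _ => sum_congr rfl fun _ _ => sum_congr rfl fun _ _ => ?_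
  split_ifs <;> ring

lemma arrMul_add_right (N : ℕ) (f g₁ g₂ : ℕ → ℕ → R) :
    arrMul N f (g₁ + g₂) = arrMul N f g₁ + arrMul N f g₂ := by
  ext k m
  simp only [arrMul, Pi.add_apply, ← sum_add_distrib]
  refine sum_congr rfl fun _ _ => sum_congr rfl fun _ _ => sum_congr rfl fun _ _ => ?_
  split_ifs <;> ring

def monomialArr (q : ℕ) (ρ : R) : ℕ → ℕ → R :=
  fun a b => if a = 0 ∧ b = q then ρ else 0

def homogArr (D : ℕ) (w : ℕ → R) : ℕ → ℕ → R :=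
  fun a b => if a ≤ D ∧ a + b = D then w a else 0

lemma arrMul_monomialArr (q : ℕ) (ρ : R) (N : ℕ) (g : ℕ → ℕ → R) (k m : ℕ) :
    arrMul N (monomialArr q ρ) g k m = if q ≤ m then ρ * g k (m - q) else 0 := by
  rw [arrMul, sum_eq_single 0 (fun j _ hj => sum_eq_zero fun s _ => sum_eq_zero fun i _ => by
    simp [monomialArr, hj]) (by simp)]
  simp only [zero_add, range_one, zero_le, true_and, monomialArr, mul_ite, mul_zero, tsub_zero,
    ite_mul, zero_mul, sum_singleton, Nat.choose_self, Nat.cast_one, Nat.descFactorial_zero,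
    mul_one, one_mul, add_zero]
  rw [sum_congr rfl fun s hs => if_pos (Nat.lt_succ_iff.mp (mem_range.mp hs)), sum_ite_eq']
  simp

lemma arrMul_homogArr (D : ℕ) (w : ℕ → R) (N : ℕ) (f : ℕ → ℕ → R) (k m : ℕ) :
    arrMul N f (homogArr D w) k m = ∑ j ∈ range (N + 1), ∑ i ∈ range (j + 1),
      if j ≤ k + i ∧ k + i ≤ j + D ∧ j + D ≤ k + m then
        (j.choose i : R) * (D + j - k - 1).descFactorial i * w (k + i - j) * f j (k + m - D - j)
      else 0 := by
  refine sum_congr rfl fun j _ => ?_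
  rw [sum_comm]
  refine sum_congr rfl fun i _ => ?_
  by_cases hguard : j ≤ k + i ∧ k + i ≤ j + D ∧ j + D ≤ k + m
  · rw [if_pos hguard, sum_eq_single (k + m - D - j)]
    · rw [if_pos (by omega), homogArr, if_pos (by omega),
        show m - (k + m - D - j) - 1 = D + j - k - 1 by omega]
      ring
    · intro s _ hs
      rw [homogArr]
      split_ifs <;> first | (exfalso; omega) | simp
    · simp
      omega
  · rw [if_neg hguard]
    refine sum_eq_zero fun s _ => ?_
    rw [homogArr]
    split_ifs <;> first | (exfalso; omega) | simp

end ArrayProduct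

lemma bicoeff_abMul {N : ℕ} {U : Polynomial (PowerSeries ℂ)} (hU : U.natDegree ≤ N)
    (V : Polynomial (PowerSeries ℂ)) :
    bicoeff (abMul U V) = arrMul N (bicoeff U) (bicoeff V) := by
  ext k m
  have hcoeff :
      (abMul U V).coeff k = ∑ j ∈ range (N + 1), U.coeff j * (aMul^[j] V).coeff k := by
    rw [abMul, U.sum_over_range' (by simp) (N + 1) (by omega), finsetSum_coeff]
    simp only [coeff_C_mul]
  rw [bicoeff, hcoeff, map_sum, arrMul]
  refine sum_congr rfl fun j _ => ?_
  rw [PowerSeries.coeff_mul, Finset.Nat.sum_antidiagonal_eq_sum_range_succ_mk]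
  refine sum_congr rfl fun s hs => ?_
  have hsm : s ≤ m := Nat.lt_succ_iff.mp (mem_range.mp hs)
  rw [← bicoeff, ← bicoeff, bicoeff_iterate_aMul, mul_sum]
  refine sum_congr rfl fun i _ => ?_
  by_cases hguard : j ≤ k + i ∧ i ≤ m - s
  · rw [if_pos hguard, if_pos (by omega)]
    ring
  · rw [if_neg hguard, if_neg (by omega), mul_zero]

lemma coeff_sum_range_C_mul_X_pow {R : Type*} [Semiring R] (N : ℕ) (c : ℕ → R) (k : ℕ) :
    (∑ j ∈ range N, C (c j) * X ^ j).coeff k = if k < N then c k else 0 := by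
  simp only [finsetSum_coeff, coeff_C_mul_X_pow, sum_ite_eq, mem_range]

noncomputable def ofArr (N : ℕ) (f : ℕ → ℕ → ℂ) : Polynomial (PowerSeries ℂ) :=
  ∑ j ∈ range N, C (PowerSeries.mk (f j)) * X ^ j

lemma bicoeff_ofArr {N : ℕ} {f : ℕ → ℕ → ℂ} (hf : ∀ k m, N ≤ k → f k m = 0) :
    bicoeff (ofArr N f) = f := by
  ext k m
  rw [bicoeff, ofArr, coeff_sum_range_C_mul_X_pow]
  split_ifs with hk
  · exact PowerSeries.coeff_mk _ _
  · rw [map_zero, hf k m (not_lt.mp hk)]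

lemma natDegree_ofArr_le (N : ℕ) (f : ℕ → ℕ → ℂ) : (ofArr N f).natDegree ≤ N - 1 := by
  refine natDegree_le_iff_coeff_eq_zero.mpr fun k hk => ?_
  rw [ofArr, coeff_sum_range_C_mul_X_pow, if_neg (by omega)]

lemma bicoeff_C_C_mul_X_pow (ρ : ℂ) (q : ℕ) :
    bicoeff (C (PowerSeries.C ρ * PowerSeries.X ^ q)) = monomialArr q ρ := by
  ext k m
  rw [bicoeff, coeff_C, monomialArr]
  split_ifs <;> simp_all

lemma bicoeff_homogeneous (D : ℕ) (w : ℕ → ℂ) :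
    bicoeff (∑ k ∈ range (D + 1), C (PowerSeries.C (w k) * PowerSeries.X ^ (D - k)) * X ^ k) =
      homogArr D w := by
  ext k m
  rw [bicoeff, coeff_sum_range_C_mul_X_pow, homogArr]
  split_ifs <;> simp_all <;> omega

section Construction

variable {K : Type*} [Field K] (D q h : ℕ) (ρ : K) (w : ℕ → K) (p : ℕ → ℕ → K)

/-- The coefficient arrays `zArr` of `Z` and `qArr` of `Q`, by recursion on the total degree.
`zHomogTerm lo k m` is the contribution of the columns `j ≥ lo` of `Z` to the coefficient of
`bᵐaᵏ` in `Z·P_D`, and `zqTerm k m` that of `Z·Q`, which involves only entries of lower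
total degree.
For `k ≥ D` the equation at `bᵐaᵏ` is solved for the diagonal entry `zArr (k - D) m` (right
division by the monic `P_D`, downwards in `j`), for `k < D` it is solved for `qArr k (m - q)`.
The guards in the sums only discard vanishing terms; they make the recursion well founded. -/
noncomputable def zArr : ℕ → ℕ → K
  | j, s =>
    if _ : j ≤ q + h ∧ q + 1 ≤ j + s then
      p (j + D) s - zqTerm (j + D) s - zHomogTerm (j + 1) (j + D) s
    else 0
  termination_by j s => (j + s + D, 0, 2 * (q + h + 1 - j))
  decreasing_by all_goals (simp [Prod.lex_def]; omega)
where
  qArr : ℕ → ℕ → K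
    | k, t =>
      if _ : k < D ∧ D + 1 ≤ k + t then
        ρ⁻¹ * (p k (t + q) - zqTerm k (t + q) - zHomogTerm 0 k (t + q))
      else 0
    termination_by k t => (k + t + q, 1, 0)
    decreasing_by all_goals (simp [Prod.lex_def]; omega)
  zHomogTerm : ℕ → ℕ → ℕ → K
    | lo, k, m =>
      ∑ j ∈ range (q + h + 1), ∑ i ∈ range (j + 1),
        if _ : lo ≤ j ∧ j ≤ k + i ∧ k + i ≤ j + D ∧ j + D ≤ k + m then
          (j.choose i : K) * (D + j - k - 1).descFactorial i * w (k + i - j) *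
            zArr j (k + m - D - j)
        else 0
    termination_by lo k m => (k + m, 0, 2 * (q + h + 1 - lo) + 1)
    decreasing_by all_goals (simp [Prod.lex_def]; omega)
  zqTerm : ℕ → ℕ → K
    | k, m =>
      ∑ j ∈ range (q + h + 1), ∑ s ∈ range (m + 1), ∑ i ∈ range (j + 1),
        if _ : j ≤ k + i ∧ i + s ≤ m ∧ q + 1 ≤ j + s ∧ j + s + D + 1 ≤ k + m then
          (j.choose i : K) * (m - s - 1).descFactorial i * zArr j s * qArr (k + i - j) (m - s - i)
        else 0
    termination_by k m => (k + m, 0, 0)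
    decreasing_by all_goals (simp [Prod.lex_def]; omega)

open zArr

variable {D q h ρ w p}

lemma zArr_eq_zero_of_le {j s : ℕ} (hjs : j + s ≤ q) : zArr D q h ρ w p j s = 0 := by
  rw [zArr, dif_neg (by omega)]

lemma zArr_eq_zero_of_lt {j s : ℕ} (hj : q + h < j) : zArr D q h ρ w p j s = 0 := by
  rw [zArr, dif_neg (by omega)]

lemma qArr_eq_zero_of_le {k t : ℕ} (hkt : k + t ≤ D) : qArr D q h ρ w p k t = 0 := by
  rw [qArr, dif_neg (by omega)]

lemma qArr_eq_zero_of_ge {k t : ℕ} (hk : D ≤ k) : qArr D q h ρ w p k t = 0 := by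
  rw [qArr, dif_neg (by omega)]

lemma zHomogTerm_eq_zero_of_le {lo k m : ℕ} (hkm : k + m ≤ D + q) :
    zHomogTerm D q h ρ w p lo k m = 0 := by
  rw [zHomogTerm]
  refine sum_eq_zero fun j _ => sum_eq_zero fun i _ => ?_
  split_ifs with hguard
  · rw [zArr_eq_zero_of_le (by omega), mul_zero]
  · rfl

lemma zHomogTerm_eq_zero_of_lt {lo k m : ℕ} (hlo : q + h < lo) :
    zHomogTerm D q h ρ w p lo k m = 0 := by
  rw [zHomogTerm]
  refine sum_eq_zero fun j hj => sum_eq_zero fun i _ => dif_neg ?_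
  have := mem_range.mp hj
  omega

lemma zqTerm_eq_zero_of_le {k m : ℕ} (hkm : k + m ≤ D + q) : zqTerm D q h ρ w p k m = 0 := by
  rw [zqTerm]
  exact sum_eq_zero fun j _ => sum_eq_zero fun s _ => sum_eq_zero fun i _ => dif_neg (by omega)

lemma zqTerm_eq_zero_of_lt {k m : ℕ} (hk : D + q + h < k) : zqTerm D q h ρ w p k m = 0 := by
  rw [zqTerm]
  refine sum_eq_zero fun j hj => sum_eq_zero fun s _ => sum_eq_zero fun i _ => ?_
  have := mem_range.mp hj
  split_ifs with hguard
  · rw [qArr_eq_zero_of_ge (by omega), mul_zero]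
  · rfl

lemma zqTerm_zero_right (k : ℕ) : zqTerm D q h ρ w p k 0 = 0 := by
  rw [zqTerm]
  refine sum_eq_zero fun j _ => sum_eq_zero fun s _ => sum_eq_zero fun i _ => ?_
  split_ifs with hguard
  · rw [qArr, dif_neg (by omega), mul_zero]
  · rfl

lemma arrMul_zArr_homogArr (k m : ℕ) :
    arrMul (q + h) (zArr D q h ρ w p) (homogArr D w) k m = zHomogTerm D q h ρ w p 0 k m := by
  rw [arrMul_homogArr, zHomogTerm]
  simp only [zero_le, true_and]
  rfl

lemma arrMul_zArr_qArr (k m : ℕ) :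
    arrMul (q + h) (zArr D q h ρ w p) (qArr D q h ρ w p) k m = zqTerm D q h ρ w p k m := by
  rw [arrMul, zqTerm]
  refine sum_congr rfl fun j _ => sum_congr rfl fun s _ => sum_congr rfl fun i _ => ?_
  by_cases hguard : j ≤ k + i ∧ i + s ≤ m
  · by_cases hsupp : q + 1 ≤ j + s ∧ j + s + D + 1 ≤ k + m
    · rw [if_pos hguard, dif_pos ⟨hguard.1, hguard.2, hsupp⟩]
    · rw [if_pos hguard, dif_neg (by omega)]
      rcases not_and_or.mp hsupp with hz | hq
      · rw [zArr_eq_zero_of_le (by omega), mul_zero, zero_mul]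
      · rw [qArr_eq_zero_of_le (by omega), mul_zero]
  · rw [if_neg hguard, dif_neg (by omega)]

lemma zHomogTerm_zero_eq (hw : w D = 1) {k : ℕ} (hk : D ≤ k) (m : ℕ) :
    zHomogTerm D q h ρ w p 0 k m =
      zArr D q h ρ w p (k - D) m + zHomogTerm D q h ρ w p (k - D + 1) k m := by
  have hdiag : zArr D q h ρ w p (k - D) m =
      ∑ j ∈ range (q + h + 1), if j = k - D then zArr D q h ρ w p j m else 0 := by
    rw [sum_ite_eq']
    split_ifs with hmem
    · rfl
    · exact zArr_eq_zero_of_lt (by simp at hmem; omega)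
  rw [hdiag, zHomogTerm, zHomogTerm, ← sum_add_distrib]
  refine sum_congr rfl fun j _ => ?_
  rcases lt_trichotomy j (k - D) with hlt | rfl | hgt
  · rw [if_neg hlt.ne, zero_add]
    rw [sum_eq_zero fun i _ => dif_neg (by omega), sum_eq_zero fun i _ => dif_neg (by omega)]
  · simp only [Nat.not_succ_le_self, false_and, dite_false, sum_const_zero, add_zero, if_true]
    rw [sum_eq_single 0 (fun i _ hi => dif_neg (by omega)) (by simp), dif_pos (by omega),
      show k + 0 - (k - D) = D by omega, show k + m - D - (k - D) = m by omega, hw]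
    simp
  · rw [if_neg hgt.ne', zero_add]
    refine sum_congr rfl fun i _ => ?_
    simp only [zero_le, true_and, Nat.succ_le_of_lt hgt]

lemma zHomogTerm_eq (hw : w D = 1) (htop : ∀ a b, D + q + h < a → p a b = 0) {k m : ℕ}
    (hk : D ≤ k) (hkm : D + q + 1 ≤ k + m) :
    zHomogTerm D q h ρ w p 0 k m = p k m - zqTerm D q h ρ w p k m := by
  rw [zHomogTerm_zero_eq hw hk]
  by_cases hkD : k - D ≤ q + h
  · rw [zArr, dif_pos ⟨hkD, by omega⟩, Nat.sub_add_cancel hk]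
    ring
  · rw [zArr_eq_zero_of_lt (by omega), zHomogTerm_eq_zero_of_lt (by omega), htop k m (by omega),
      zqTerm_eq_zero_of_lt (by omega)]
    ring

theorem arrMul_factorization (hw : w D = 1) (hρ : ρ ≠ 0)
    (hlow : ∀ a b, a + b < D + q → p a b = 0)
    (hinit : ∀ a b, a + b = D + q → p a b = ρ * (if a ≤ D then w a else 0))
    (htop : ∀ a b, D + q + h < a → p a b = 0) :
    arrMul (q + h) (monomialArr q ρ + zArr D q h ρ w p) (homogArr D w + qArr D q h ρ w p) =
      p := by
  ext k m
  simp only [arrMul_add_left, arrMul_add_right, Pi.add_apply, arrMul_monomialArr,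
    arrMul_zArr_homogArr, arrMul_zArr_qArr]
  rcases lt_or_ge (D + q) (k + m) with hn | hn
  · have hhom : homogArr D w k (m - q) = 0 := by
      rw [homogArr]
      exact if_neg (by omega)
    rw [hhom, mul_zero, ite_self, zero_add]
    rcases lt_or_ge k D with hk | hk
    · rw [if_pos (by omega), qArr, dif_pos ⟨hk, by omega⟩,
        Nat.sub_add_cancel (by omega : q ≤ m)]
      field_simp
      ring
    · rw [qArr_eq_zero_of_ge hk, mul_zero, ite_self, zHomogTerm_eq hw htop hk (by omega)]
      ring
  · have hqArr : qArr D q h ρ w p k (m - q) = 0 := by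
      rcases le_or_gt D k with hk | hk
      · exact qArr_eq_zero_of_ge hk
      · exact qArr_eq_zero_of_le (by omega)
    rw [hqArr, zHomogTerm_eq_zero_of_le hn, zqTerm_eq_zero_of_le hn]
    simp only [mul_zero, ite_self, add_zero]
    rcases hn.lt_or_eq with hn | hn
    · rw [hlow k m hn]
      split_ifs
      · rw [homogArr, if_neg (by omega), mul_zero]
      · rfl
    · rw [hinit k m hn, homogArr]
      split_ifs <;> first | (exfalso; omega) | simp

lemma zArr_leading (hh : 1 ≤ h) (hlead : p (q + h + D) 0 = 1) :
    zArr D q h ρ w p (q + h) 0 = 1 := by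
  rw [zArr, dif_pos ⟨le_rfl, by omega⟩, zqTerm_zero_right, zHomogTerm_eq_zero_of_lt (by omega),
    hlead, sub_zero, sub_zero]

end Construction

section Factors

open zArr

variable (D q h : ℕ) (ρ : ℂ) (w : ℕ → ℂ) (P : Polynomial (PowerSeries ℂ))

noncomputable def zPoly : Polynomial (PowerSeries ℂ) :=
  ofArr (q + h + 1) (zArr D q h ρ w (bicoeff P))

noncomputable def qPoly : Polynomial (PowerSeries ℂ) :=
  ofArr D (qArr D q h ρ w (bicoeff P))

variable {D q h ρ w P}

lemma bicoeff_zPoly : bicoeff (zPoly D q h ρ w P) = zArr D q h ρ w (bicoeff P) :=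
  bicoeff_ofArr fun _ _ hk => zArr_eq_zero_of_lt (by omega)

lemma bicoeff_qPoly : bicoeff (qPoly D q h ρ w P) = qArr D q h ρ w (bicoeff P) :=
  bicoeff_ofArr fun _ _ hk => qArr_eq_zero_of_ge hk

lemma natDegree_zPoly_le : (zPoly D q h ρ w P).natDegree ≤ q + h :=
  natDegree_ofArr_le _ _

lemma natDegree_qPoly_le : (qPoly D q h ρ w P).natDegree ≤ D - 1 :=
  natDegree_ofArr_le _ _

lemma natDegree_zPoly (hh : 1 ≤ h) (hlead : bicoeff P (q + h + D) 0 = 1) :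
    (zPoly D q h ρ w P).natDegree = q + h := by
  refine natDegree_eq_of_le_of_coeff_ne_zero natDegree_zPoly_le fun h0 => ?_
  have hcoeff : bicoeff (zPoly D q h ρ w P) (q + h) 0 = 1 := by
    rw [bicoeff_zPoly, zArr_leading hh hlead]
  rw [bicoeff, h0, map_zero] at hcoeff
  exact zero_ne_one hcoeff

lemma abMul_zPoly_qPoly (hw : w D = 1) (hρ : ρ ≠ 0)
    (hlow : ∀ a b, a + b < D + q → bicoeff P a b = 0)
    (hinit : ∀ a b, a + b = D + q → bicoeff P a b = ρ * (if a ≤ D then w a else 0))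
    (htop : ∀ a b, D + q + h < a → bicoeff P a b = 0) :
    abMul (C (PowerSeries.C ρ * PowerSeries.X ^ q) + zPoly D q h ρ w P)
      (∑ k ∈ range (D + 1), C (PowerSeries.C (w k) * PowerSeries.X ^ (D - k)) * X ^ k +
        qPoly D q h ρ w P) = P := by
  refine ext_bicoeff ?_
  rw [bicoeff_abMul (natDegree_add_le_of_degree_le (by rw [natDegree_C]; omega)
      natDegree_zPoly_le), bicoeff_add, bicoeff_add, bicoeff_C_C_mul_X_pow,
    bicoeff_homogeneous, bicoeff_zPoly, bicoeff_qPoly]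
  exact arrMul_factorization hw hρ hlow hinit htop

end Factors

end SecondFactorization

open SecondFactorization

theorem second_factorization_general
    (d h q : ℕ) (hh : 1 ≤ h) (hq : q ≤ d) (ρ : ℂ) (hρ : ρ ≠ 0)
    (P : Polynomial (PowerSeries ℂ))
    (hmonic : P.Monic) (hdeg : P.natDegree = d + h)
    (w : ℕ → ℂ) (hw : w (d - q) = 1)
    (Pd : Polynomial (PowerSeries ℂ))
    (hPd : Pd = ∑ k ∈ Finset.range (d - q + 1),
      Polynomial.C (PowerSeries.C (w k) * PowerSeries.X ^ (d - q - k)) * Polynomial.X ^ k)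
    -- the initial form of `P` in `(a,b)` is `ρ·b^q·P_{d−q}`, of total degree `d` :
    (hval : ∀ k m : ℕ, m + k < d → PowerSeries.coeff m (P.coeff k) = 0)
    (hinit : ∀ k ≤ d, PowerSeries.coeff (d - k) (P.coeff k)
      = ρ * (if k ≤ d - q then w k else 0)) :
    ∃ Z Q : Polynomial (PowerSeries ℂ),
      Z.natDegree = q + h ∧ Q.natDegree ≤ d - q - 1 ∧
      -- valuation of `Z` in `(a,b)` is at least `q+1`
      (∀ k m : ℕ, m + k ≤ q → PowerSeries.coeff m (Z.coeff k) = 0) ∧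
      -- valuation of `Q` in `(a,b)` is at least `d−q+1`
      (∀ k m : ℕ, m + k ≤ d - q → PowerSeries.coeff m (Q.coeff k) = 0) ∧
      abMul (Polynomial.C (PowerSeries.C ρ * PowerSeries.X ^ q) + Z) (Pd + Q) = P := by
  set D := d - q with hD
  have hlow (a b : ℕ) (hab : a + b < D + q) : bicoeff P a b = 0 := hval a b (by omega)
  have hinit' (a b : ℕ) (hab : a + b = D + q) :
      bicoeff P a b = ρ * if a ≤ D then w a else 0 := by
    obtain rfl : b = d - a := by omega
    exact hinit a (by omega)
  have htop (a b : ℕ) (ha : D + q + h < a) : bicoeff P a b = 0 := by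
    rw [bicoeff, Polynomial.coeff_eq_zero_of_natDegree_lt (by omega), map_zero]
  have hlead : bicoeff P (q + h + D) 0 = 1 := by
    rw [bicoeff, show q + h + D = P.natDegree by omega, hmonic.coeff_natDegree,
      PowerSeries.coeff_zero_one]
  refine ⟨zPoly D q h ρ w P, qPoly D q h ρ w P, natDegree_zPoly hh hlead,
    natDegree_qPoly_le, fun k m hkm => ?_, fun k m hkm => ?_,
    hPd ▸ abMul_zPoly_qPoly hw hρ hlow hinit' htop⟩
  · show bicoeff _ k m = 0
    rw [bicoeff_zPoly, zArr_eq_zero_of_le (by omega)]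
  · show bicoeff _ k m = 0
    rw [bicoeff_qPoly, qArr_eq_zero_of_le (by omega)]

/-- **Second factorization theorem.**  Let `P ∈ Ã` be monic in `a` of degree `d+h`,
`h ≥ 1`, congruent to `a^{d+h}` modulo `b·Ã`, whose initial form in `(a,b)` has
degree `d` and equals `ρ·b^q·P_{d−q}` with `ρ ∈ ℂ*`, `0 ≤ q ≤ d`, and `P_{d−q}`
homogeneous of degree `d−q`, monic in `a` (with coefficients `w_k`,
`w_{d−q} = 1`).  Then there exist `Z, Q ∈ Ã`, polynomials in `a` of degrees
`q+h` and at most `d−q−1`, with `(a,b)`-valuations at least `q+1` and `d−q+1`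
respectively, such that `(ρ·b^q + Z)·(P_{d−q} + Q) = P` in `Ã`. -/
theorem second_factorization
    (d h q : ℕ) (hh : 1 ≤ h) (hq : q ≤ d) (ρ : ℂ) (hρ : ρ ≠ 0)
    (P : Polynomial (PowerSeries ℂ))
    (hmonic : P.Monic) (hdeg : P.natDegree = d + h)
    -- `P ≡ a^{d+h}` modulo `b·Ã`
    (hmod : ∀ k < d + h, PowerSeries.constantCoeff (P.coeff k) = 0)
    (w : ℕ → ℂ) (hw : w (d - q) = 1)
    (Pd : Polynomial (PowerSeries ℂ))
    (hPd : Pd = ∑ k ∈ Finset.range (d - q + 1),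
      Polynomial.C (PowerSeries.C (w k) * PowerSeries.X ^ (d - q - k)) * Polynomial.X ^ k)
    -- the initial form of `P` in `(a,b)` is `ρ·b^q·P_{d−q}`, of total degree `d` :
    (hval : ∀ k m : ℕ, m + k < d → PowerSeries.coeff m (P.coeff k) = 0)
    (hinit : ∀ k ≤ d, PowerSeries.coeff (d - k) (P.coeff k)
      = ρ * (if k ≤ d - q then w k else 0)) :
    ∃ Z Q : Polynomial (PowerSeries ℂ),
      Z.natDegree = q + h ∧ Q.natDegree ≤ d - q - 1 ∧
      -- valuation of `Z` in `(a,b)` is at least `q+1`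
      (∀ k m : ℕ, m + k ≤ q → PowerSeries.coeff m (Z.coeff k) = 0) ∧
      -- valuation of `Q` in `(a,b)` is at least `d−q+1`
      (∀ k m : ℕ, m + k ≤ d - q → PowerSeries.coeff m (Q.coeff k) = 0) ∧
      abMul (Polynomial.C (PowerSeries.C ρ * PowerSeries.X ^ q) + Z) (Pd + Q) = P :=
  second_factorization_general d h q hh hq ρ hρ P hmonic hdeg w hw Pd hPd hval hinit
end

section
/- Every homogeneous element P of degree q in (a,b) in the algebra A = C<a,b> (relation ab − ba = b²) that is monic in a can be written as a product P = (a − r₁·b)·(a − r₂·b)···(a − r_q·b) for suitable complex numbers r₁,…,r_q. -/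
/-- The defining relation of the algebra `A = ℂ⟨a,b⟩` with `a·b − b·a = b²`,
i.e. `a·b = b·a + b·b`; the generator `true` plays the role of `a` and
`false` that of `b`. -/
inductive ABRel : FreeAlgebra ℂ Bool → FreeAlgebra ℂ Bool → Prop
  | comm : ABRel (FreeAlgebra.ι ℂ true * FreeAlgebra.ι ℂ false)
      (FreeAlgebra.ι ℂ false * FreeAlgebra.ι ℂ true +
        FreeAlgebra.ι ℂ false * FreeAlgebra.ι ℂ false)

/-- The algebra `A = ℂ⟨a,b⟩` with the relation `ab − ba = b²`. -/
abbrev ABAlgebra := RingQuot ABRel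

/-- The generator `a` of `A`. -/
noncomputable def genA : ABAlgebra := RingQuot.mkAlgHom ℂ ABRel (FreeAlgebra.ι ℂ true)

/-- The generator `b` of `A`. -/
noncomputable def genB : ABAlgebra := RingQuot.mkAlgHom ℂ ABRel (FreeAlgebra.ι ℂ false)

/-!
Inverting `b` and putting `u = b⁻¹ a`, the relation becomes `u b = b (u + 1)`. Hence
`a - r b = b (u - r)`, `b ^ (q - k) a ^ k = b ^ q u (u + 1) ⋯ (u + k - 1)`, and
`P = b ^ q f(u)` where `f = X⁽q⁾ + ∑ c_k X⁽ᵏ⁾` (rising factorials) is monic of degree `q`.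
Factor `f = ∏ (X - x_i)` over `ℂ`; moving the factors `b` of `∏ b (u - x_i)` to the left shifts
each root by the number of `b`s it passes. No localization is needed: `p ↦ b ^ n p(u)` makes sense
inside `A` for `deg p ≤ n`, since `b ^ j u ^ j = (a - (j - 1) b) ⋯ (a - b) a`.
-/

open Polynomial

lemma genA_mul_genB : genA * genB = genB * genA + genB * genB := by
  unfold genA genB
  rw [← map_mul, ← map_mul, ← map_mul, ← map_add]
  exact RingQuot.mkAlgHom_rel ℂ ABRel.comm

theorem Polynomial.linearMap_eq_of_natDegree_le {K M : Type*} [CommRing K] [AddCommMonoid M]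
    [Module K M] {f g : K[X] →ₗ[K] M} {n : ℕ} (hfg : ∀ j ≤ n, f (X ^ j) = g (X ^ j))
    {p : K[X]} (hp : p.natDegree ≤ n) : f p = g p := by
  rw [p.as_sum_range' (n + 1) (Nat.lt_succ_of_le hp), map_sum, map_sum]
  refine Finset.sum_congr rfl fun j hj => ?_
  rw [← smul_X_eq_monomial, map_smul, map_smul,
    hfg j (Nat.lt_succ_iff.mp (Finset.mem_range.mp hj))]

theorem Polynomial.exists_list_prod_X_sub_C_eq {K : Type*} [Field K] [IsAlgClosed K] {f : K[X]}
    (hf : f.Monic) : ∃ s : List K, s.length = f.natDegree ∧ (s.map (X - C ·)).prod = f := by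
  refine ⟨f.roots.toList, by simp [IsAlgClosed.card_roots_eq_natDegree], ?_⟩
  conv_rhs => rw [(IsAlgClosed.splits f).eq_prod_roots_of_monic hf, ← Multiset.coe_toList f.roots]
  rfl

theorem Polynomial.degree_sum_smul_ascPochhammer_lt {K : Type*} [CommRing K] [IsDomain K]
    (c : ℕ → K) (q : ℕ) : (∑ k ∈ Finset.range q, c k • ascPochhammer K k).degree < q := by
  rw [← mem_degreeLT]
  refine Submodule.sum_mem _ fun k hk => Submodule.smul_mem _ _ ?_
  rw [mem_degreeLT, degree_eq_natDegree (monic_ascPochhammer K k).ne_zero, ascPochhammer_natDegree]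
  exact_mod_cast Finset.mem_range.mp hk

section SkewHomogenize

variable {K R : Type*} [CommRing K] [Ring R] [Algebra K R] {a b : R}

theorem mul_pow_of_mul_eq (h : a * b = b * a + b * b) (m : ℕ) :
    a * b ^ m = b ^ m * a + m • b ^ (m + 1) := by
  induction m with
  | zero => simp
  | succ m ih =>
    calc a * b ^ (m + 1) = (a * b ^ m) * b := by rw [pow_succ, mul_assoc]
      _ = b ^ m * (a * b) + m • b ^ (m + 2) := by
        rw [ih, add_mul, mul_assoc, smul_mul_assoc, ← pow_succ]
      _ = b ^ (m + 1) * a + (m + 1) • b ^ (m + 2) := by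
        rw [h, mul_add, ← mul_assoc, ← mul_assoc, ← pow_succ, ← pow_succ, add_smul, one_smul]
        abel

theorem sub_smul_mul_pow_of_mul_eq (h : a * b = b * a + b * b) (r : K) (m : ℕ) :
    (a - r • b) * b ^ m = b ^ m * (a - (r - m) • b) := by
  rw [sub_mul, mul_pow_of_mul_eq h, mul_sub, sub_smul, mul_sub, smul_mul_assoc, mul_smul_comm,
    mul_smul_comm, ← pow_succ, ← pow_succ', Nat.cast_smul_eq_nsmul]
  abel

variable (a b) in
def skewDescProd : ℕ → R
  | 0 => 1
  | j + 1 => (a - j • b) * skewDescProd j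

/-- `p ↦ b ^ n p(b⁻¹ a)`, using `b ^ j (b⁻¹ a) ^ j = skewDescProd a b j`. It is only meaningful
for `p.natDegree ≤ n`: beyond that, `b ^ (n - j)` sees a truncated subtraction. -/
noncomputable def skewHomogenize (K : Type*) [CommRing K] [Algebra K R] (a b : R) (n : ℕ) :
    K[X] →ₗ[K] R :=
  lsum fun j => LinearMap.toSpanSingleton K R (b ^ (n - j) * skewDescProd a b j)

variable (K) in
theorem skewHomogenize_X_pow (n j : ℕ) :
    skewHomogenize K a b n (X ^ j) = b ^ (n - j) * skewDescProd a b j := by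
  simp [skewHomogenize, ← monomial_one_right_eq_X_pow, sum_monomial_index]

theorem skewHomogenize_one (n : ℕ) : skewHomogenize K a b n 1 = b ^ n := by
  rw [← pow_zero X, skewHomogenize_X_pow, skewDescProd, Nat.sub_zero, mul_one]

theorem skewHomogenize_succ {n : ℕ} {p : K[X]} (hp : p.natDegree ≤ n) :
    skewHomogenize K a b (n + 1) p = b * skewHomogenize K a b n p := by
  refine linearMap_eq_of_natDegree_le (g := (LinearMap.mulLeft K b).comp _) (fun j hj => ?_) hp
  rw [LinearMap.comp_apply, LinearMap.mulLeft_apply, skewHomogenize_X_pow, skewHomogenize_X_pow,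
    ← mul_assoc, ← pow_succ', Nat.sub_add_comm hj]

theorem skewHomogenize_succ_X_mul (h : a * b = b * a + b * b) {n : ℕ} {p : K[X]}
    (hp : p.natDegree ≤ n) :
    skewHomogenize K a b (n + 1) (X * p) = (a - (n : K) • b) * skewHomogenize K a b n p := by
  refine linearMap_eq_of_natDegree_le
    (f := (skewHomogenize K a b (n + 1)).comp (LinearMap.mulLeft K X))
    (g := (LinearMap.mulLeft K (a - (n : K) • b)).comp _) (fun j hj => ?_) hp
  simp only [LinearMap.comp_apply, LinearMap.mulLeft_apply, ← pow_succ', skewHomogenize_X_pow]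
  rw [← mul_assoc, sub_smul_mul_pow_of_mul_eq h, Nat.cast_sub hj, sub_sub_cancel,
    Nat.cast_smul_eq_nsmul, mul_assoc, Nat.succ_sub_succ, skewDescProd]

theorem skewHomogenize_succ_X_sub_C_mul (h : a * b = b * a + b * b) (s : K) {n : ℕ} {p : K[X]}
    (hp : p.natDegree ≤ n) :
    skewHomogenize K a b (n + 1) ((X - C s) * p) =
      (a - (s + n) • b) * skewHomogenize K a b n p := by
  rw [sub_mul, C_mul', map_sub, map_smul, skewHomogenize_succ_X_mul h hp, skewHomogenize_succ hp,
    add_smul, sub_add_eq_sub_sub_swap]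
  simp only [sub_mul, smul_mul_assoc]

theorem skewHomogenize_ascPochhammer [IsDomain K] (h : a * b = b * a + b * b) {k n : ℕ}
    (hk : k ≤ n) : skewHomogenize K a b n (ascPochhammer K k) = b ^ (n - k) * a ^ k := by
  induction k generalizing n with
  | zero => rw [ascPochhammer_zero, skewHomogenize_one, Nat.sub_zero, pow_zero, mul_one]
  | succ k ih =>
    obtain ⟨m, rfl⟩ : ∃ m, n = m + 1 := ⟨n - 1, by omega⟩
    have hkm : k ≤ m := by omega
    rw [ascPochhammer_succ_right, mul_comm, ← sub_neg_eq_add X, ← C_eq_natCast, ← C_neg,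
      skewHomogenize_succ_X_sub_C_mul h _ ((ascPochhammer_natDegree K k).trans_le hkm), ih hkm,
      ← mul_assoc, sub_smul_mul_pow_of_mul_eq h, Nat.cast_sub hkm,
      show -(k : K) + m - (m - k) = 0 by ring, zero_smul, sub_zero, mul_assoc, ← pow_succ',
      Nat.add_sub_add_right]

theorem skewHomogenize_prod_X_sub_C [Nontrivial K] (h : a * b = b * a + b * b) (s : List K) :
    skewHomogenize K a b s.length (s.map (X - C ·)).prod =
      (List.ofFn fun k : Fin s.length => a - (s[k] + (s.length - 1 - k : ℕ)) • b).prod := by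
  induction s with
  | nil => simp [skewHomogenize_one]
  | cons x t ih =>
    have ht : (t.map (X - C ·)).prod.natDegree ≤ t.length := by
      simpa using (natDegree_multiset_prod_X_sub_C_eq_card (t : Multiset K)).le
    show skewHomogenize K a b (t.length + 1) ((X - C x) * (t.map (X - C ·)).prod) =
      (List.ofFn fun k : Fin (t.length + 1) => a - ((x :: t)[k] + (t.length - k : ℕ)) • b).prod
    rw [skewHomogenize_succ_X_sub_C_mul h x ht, ih, List.ofFn_succ, List.prod_cons]
    simp only [Fin.val_zero, Fin.val_succ, Nat.sub_zero, Nat.sub_sub, Nat.add_comm 1]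
    rfl

end SkewHomogenize

theorem exists_prod_sub_smul_eq_of_mul_eq {K R : Type*} [Field K] [IsAlgClosed K] [Ring R]
    [Algebra K R] {a b : R} (h : a * b = b * a + b * b) (q : ℕ) (c : ℕ → K) :
    ∃ r : Fin q → K, a ^ q + ∑ k ∈ Finset.range q, c k • (b ^ (q - k) * a ^ k) =
      (List.ofFn fun k : Fin q => a - r k • b).prod := by
  set f := ascPochhammer K q + ∑ k ∈ Finset.range q, c k • ascPochhammer K k
  have hlow :
      (∑ k ∈ Finset.range q, c k • ascPochhammer K k).degree < (ascPochhammer K q).degree := by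
    rw [degree_eq_natDegree (monic_ascPochhammer K q).ne_zero, ascPochhammer_natDegree]
    exact degree_sum_smul_ascPochhammer_lt c q
  have hfq : f.natDegree = q := by
    rw [natDegree_add_eq_left_of_degree_lt hlow, ascPochhammer_natDegree]
  obtain ⟨s, hs, hsf⟩ := exists_list_prod_X_sub_C_eq ((monic_ascPochhammer K q).add_of_left hlow)
  have hP : a ^ q + ∑ k ∈ Finset.range q, c k • (b ^ (q - k) * a ^ k) =
      skewHomogenize K a b q f := by
    rw [map_add, map_sum, skewHomogenize_ascPochhammer h le_rfl, Nat.sub_self, pow_zero, one_mul]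
    refine congrArg _ (Finset.sum_congr rfl fun k hk => ?_)
    rw [map_smul, skewHomogenize_ascPochhammer h (Finset.mem_range.mp hk).le]
  rw [hfq] at hs
  subst hs
  exact ⟨_, hP.trans (hsf ▸ skewHomogenize_prod_X_sub_C h s)⟩

/-- Every homogeneous element of degree `q` in `(a,b)` of `A = ℂ⟨a,b⟩`
(`ab − ba = b²`) which is monic in `a` — in normal form,
`P = a^q + Σ_{k<q} c_k·b^{q−k}·a^k` — can be written as a product
`P = (a − r₁·b)·(a − r₂·b)⋯(a − r_q·b)` for suitable complex numbers
`r₁,…,r_q`. -/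
theorem homogeneous_monic_factorization (q : ℕ) (c : ℕ → ℂ) :
    ∃ r : Fin q → ℂ,
      genA ^ q + ∑ k ∈ Finset.range q, c k • (genB ^ (q - k) * genA ^ k) =
        (List.ofFn (fun k : Fin q => genA - r k • genB)).prod :=
  exists_prod_sub_smul_eq_of_mul_eq genA_mul_genB q c
end
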